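/- arXiv:2503.02798 — 5 statements merged into one kernel-verified Lean document; each statement's English description precedes it below -/
import Mathlib

section
/- Let A = (1/σ²)XᵀX + I_d and b = (1/σ²)Xᵀy for X ∈ ℝ^{n×d}, y ∈ ℝⁿ, σ > 0. For a vector θ̂ ∈ ℝ^d with support T, let z = b - Aθ̂. Then for any subsets S, S' ⊆ [d] both containing T, writing A_S for the principal submatrix of A indexed by S, we have exp(½‖b_S‖²_{A_S⁻¹}) / exp(½‖b_{S'}‖²_{A_{S'}⁻¹}) = exp(½‖z_S‖²_{A_S⁻¹}) / exp(½‖z_{S'}‖²_{A_{S'}⁻¹}). -/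
open Matrix

/-- The `S × S` principal submatrix of `A`. -/
noncomputable def subMat {d : ℕ} (A : Matrix (Fin d) (Fin d) ℝ) (S : Finset (Fin d)) :
    Matrix S S ℝ := A.submatrix Subtype.val Subtype.val

/-- Restriction of a vector to coordinates in `S`. -/
def restr {d : ℕ} (v : Fin d → ℝ) (S : Finset (Fin d)) : S → ℝ := fun i => v i.1

/-- The quadratic form `‖v_S‖²_{A_S⁻¹}`. -/
noncomputable def quadInv {d : ℕ} (A : Matrix (Fin d) (Fin d) ℝ) (S : Finset (Fin d))
    (v : Fin d → ℝ) : ℝ := restr v S ⬝ᵥ ((subMat A S)⁻¹ *ᵥ restr v S)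



-- submatrix is posdef
lemma subMat_posDef {n d : ℕ} (X : Matrix (Fin n) (Fin d) ℝ) (σ : ℝ) (hσ : 0 < σ)
    (A : Matrix (Fin d) (Fin d) ℝ) (hA : A = (σ ^ 2)⁻¹ • (Xᵀ * X) + 1)
    (S : Finset (Fin d)) : (subMat A S).PosDef := by
  have h1 : (σ ^ 2)⁻¹ • (Xᵀ * X) = (σ⁻¹ • X)ᵀ * (σ⁻¹ • X) := by
    rw [transpose_smul, smul_mul, Matrix.mul_smul, smul_smul]
    congr 1
    rw [sq, mul_inv]
  have hpsd : ((σ ^ 2)⁻¹ • (Xᵀ * X)).PosSemidef := by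
    rw [h1, ← conjTranspose_eq_transpose_of_trivial]
    exact posSemidef_conjTranspose_mul_self _
  have h2 : subMat A S = subMat ((σ ^ 2)⁻¹ • (Xᵀ * X)) S + 1 := by
    ext i j
    simp [subMat, hA, Matrix.one_apply, Subtype.val_inj, Matrix.add_apply]
  rw [h2]
  exact Matrix.PosDef.posSemidef_add (hpsd.submatrix _) Matrix.PosDef.one

lemma subMat_symm {d : ℕ} (A : Matrix (Fin d) (Fin d) ℝ) (hAs : Aᵀ = A)
    (S : Finset (Fin d)) : (subMat A S)ᵀ = subMat A S := by
  unfold subMat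
  rw [transpose_submatrix, hAs]

lemma restr_mulVec {d : ℕ} (A : Matrix (Fin d) (Fin d) ℝ) (θ : Fin d → ℝ)
    (S : Finset (Fin d)) (hsupp : ∀ i, i ∉ S → θ i = 0) :
    restr (A *ᵥ θ) S = subMat A S *ᵥ restr θ S := by
  funext i
  show ∑ j : Fin d, A i.1 j * θ j = ∑ j : {x // x ∈ S}, A i.1 j.1 * θ j.1
  rw [Finset.sum_coe_sort S (fun j => A i.1 j * θ j)]
  refine (Finset.sum_subset (Finset.subset_univ S) ?_).symm
  intro j _ hj
  rw [hsupp j hj, mul_zero]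

lemma restr_dot {d : ℕ} (θ v : Fin d → ℝ) (S : Finset (Fin d))
    (hsupp : ∀ i, i ∉ S → θ i = 0) :
    restr θ S ⬝ᵥ restr v S = θ ⬝ᵥ v := by
  show ∑ j : {x // x ∈ S}, θ j.1 * v j.1 = ∑ j : Fin d, θ j * v j
  rw [Finset.sum_coe_sort S (fun j => θ j * v j)]
  refine Finset.sum_subset (Finset.subset_univ S) ?_
  intro j _ hj
  rw [hsupp j hj, zero_mul]

lemma quad_diff {d : ℕ} (A : Matrix (Fin d) (Fin d) ℝ) (hAs : Aᵀ = A)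
    (S : Finset (Fin d)) (hpd : (subMat A S).PosDef)
    (θ b : Fin d → ℝ) (hsupp : ∀ i, i ∉ S → θ i = 0) :
    quadInv A S (b - A *ᵥ θ) = quadInv A S b - (2 * (θ ⬝ᵥ b) - θ ⬝ᵥ (A *ᵥ θ)) := by
  have hinv := hpd.isUnit.invertible
  set M := subMat A S with hM
  have hMs : Mᵀ = M := subMat_symm A hAs S
  have hMis : M⁻¹ᵀ = M⁻¹ := by rw [transpose_nonsing_inv, hMs]
  have hcomm : ∀ u v : S → ℝ, u ⬝ᵥ M⁻¹ *ᵥ v = v ⬝ᵥ M⁻¹ *ᵥ u := by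
    intro u v
    rw [dotProduct_mulVec, ← vecMul_transpose, hMis, dotProduct_comm]
  have hMM : ∀ u : S → ℝ, M⁻¹ *ᵥ (M *ᵥ u) = u := by
    intro u
    rw [mulVec_mulVec, Matrix.inv_mul_of_invertible, one_mulVec]
  have hrz : restr (b - A *ᵥ θ) S = restr b S - M *ᵥ restr θ S := by
    funext i
    show (b - A *ᵥ θ) i.1 = restr b S i - (M *ᵥ restr θ S) i
    rw [← restr_mulVec A θ S hsupp]
    simp [restr]
  set bS := restr b S
  set tS := restr θ S
  have htb : tS ⬝ᵥ bS = θ ⬝ᵥ b := restr_dot θ b S hsupp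
  have htA : tS ⬝ᵥ (M *ᵥ tS) = θ ⬝ᵥ (A *ᵥ θ) := by
    rw [← restr_mulVec A θ S hsupp]
    exact restr_dot θ _ S hsupp
  unfold quadInv
  rw [hrz]
  rw [mulVec_sub, sub_dotProduct, dotProduct_sub, dotProduct_sub]
  rw [hMM, hcomm (M *ᵥ tS) bS, hMM, dotProduct_comm bS tS, htb]
  rw [dotProduct_comm (M *ᵥ tS) tS, htA]
  ring

theorem stmt_0 {n d : ℕ} (X : Matrix (Fin n) (Fin d) ℝ) (y : Fin n → ℝ)
    (σ : ℝ) (hσ : 0 < σ) (θhat : Fin d → ℝ) (T S S' : Finset (Fin d))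
    (hT : ∀ i, θhat i ≠ 0 ↔ i ∈ T) (hS : T ⊆ S) (hS' : T ⊆ S')
    (A : Matrix (Fin d) (Fin d) ℝ) (hA : A = (σ ^ 2)⁻¹ • (Xᵀ * X) + 1)
    (b z : Fin d → ℝ) (hb : b = (σ ^ 2)⁻¹ • (Xᵀ *ᵥ y)) (hz : z = b - A *ᵥ θhat) :
    Real.exp ((1 / 2) * quadInv A S b) / Real.exp ((1 / 2) * quadInv A S' b) =
      Real.exp ((1 / 2) * quadInv A S z) / Real.exp ((1 / 2) * quadInv A S' z) := by
  have hAs : Aᵀ = A := by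
    rw [hA]
    simp [transpose_add, transpose_smul, transpose_mul]
  have hsupp : ∀ (W : Finset (Fin d)), T ⊆ W → ∀ i, i ∉ W → θhat i = 0 := by
    intro W hW i hi
    by_contra h
    exact hi (hW ((hT i).mp h))
  have hq1 : quadInv A S z = quadInv A S b - (2 * (θhat ⬝ᵥ b) - θhat ⬝ᵥ (A *ᵥ θhat)) := by
    rw [hz]
    exact quad_diff A hAs S (subMat_posDef X σ hσ A hA S) θhat b (hsupp S hS)
  have hq2 : quadInv A S' z = quadInv A S' b - (2 * (θhat ⬝ᵥ b) - θhat ⬝ᵥ (A *ᵥ θhat)) := by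
    rw [hz]
    exact quad_diff A hAs S' (subMat_posDef X σ hσ A hA S') θhat b (hsupp S' hS')
  rw [hq1, hq2, ← Real.exp_sub, ← Real.exp_sub]
  congr 1
  ring
end

section
/- Let X ∈ ℝ^{n×d} satisfy the (ε, s+1)-restricted isometry property for ε ∈ (0,1). Then for any subset S ⊆ [d] with |S| ≤ s and any j ∉ S, we have ‖[XᵀX]_{S×S}⁻¹ X_{S:}ᵀ X_{:j}‖₁ ≤ √(2sε/(1-ε)). In other words, X satisfies the mutual incoherence condition over S with parameter α = √(2sε/(1-ε)). -/
open Matrix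

/-- `X` satisfies the `(ε, s)`-restricted isometry property. -/
def IsRIP {n d : ℕ} (X : Matrix (Fin n) (Fin d) ℝ) (ε : ℝ) (s : ℕ) : Prop :=
  ∀ θ : Fin d → ℝ, {i | θ i ≠ 0}.ncard ≤ s →
    (1 - ε) * (∑ i, θ i ^ 2) ≤ (∑ i, (X *ᵥ θ) i ^ 2) ∧
      (∑ i, (X *ᵥ θ) i ^ 2) ≤ (1 + ε) * (∑ i, θ i ^ 2)

section aux

variable {n d : ℕ} (X : Matrix (Fin n) (Fin d) ℝ)

lemma quad_eq (w : Fin d → ℝ) :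
    w ⬝ᵥ ((Xᵀ * X) *ᵥ w) = ∑ i, (X *ᵥ w) i ^ 2 := by
  rw [← mulVec_mulVec, dotProduct_mulVec, vecMul_transpose]
  simp [dotProduct, sq]

variable {S : Finset (Fin d)}

/-- extend a vector on `S` by zero -/
noncomputable def extS (θ : S → ℝ) : Fin d → ℝ :=
  fun i => if h : i ∈ S then θ ⟨i, h⟩ else 0

lemma extS_dot (θ : S → ℝ) (f : Fin d → ℝ) :
    ∑ i, extS θ i * f i = ∑ i : S, θ i * f i.1 := by
  rw [← Finset.sum_subset (Finset.subset_univ S)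
      (fun x _ hx => by simp [extS, hx]),
    ← Finset.sum_coe_sort S (fun i => extS θ i * f i)]
  refine Finset.sum_congr rfl fun i _ => ?_
  simp [extS]

lemma mulVec_extS (M : Matrix (Fin d) (Fin d) ℝ) (θ : S → ℝ) (i : Fin d) :
    (M *ᵥ extS θ) i = ∑ k : S, M i k.1 * θ k := by
  have : (M *ᵥ extS θ) i = ∑ k, extS θ k * M i k := by
    simp [mulVec, dotProduct, mul_comm]
  rw [this, extS_dot]
  exact Finset.sum_congr rfl fun k _ => mul_comm _ _

lemma extS_sq_sum (θ : S → ℝ) : ∑ i, extS θ i ^ 2 = ∑ i : S, θ i ^ 2 := by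
  simp only [sq]
  rw [extS_dot θ (extS θ)]
  exact Finset.sum_congr rfl fun i _ => by simp [extS]

lemma extS_support (θ : S → ℝ) : {i | extS θ i ≠ 0}.ncard ≤ S.card := by
  have hsub : {i | extS θ i ≠ 0} ⊆ (S : Set (Fin d)) := by
    intro i hi
    by_contra h
    exact hi (dif_neg (by simpa using h))
  calc {i | extS θ i ≠ 0}.ncard ≤ (S : Set (Fin d)).ncard :=
        Set.ncard_le_ncard hsub (S.finite_toSet)
    _ = S.card := Set.ncard_coe_finset S

end aux

theorem stmt_5 {n d s : ℕ} (X : Matrix (Fin n) (Fin d) ℝ) (ε : ℝ)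
    (hε : ε ∈ Set.Ioo (0 : ℝ) 1) (hX : IsRIP X ε (s + 1))
    (S : Finset (Fin d)) (hcard : S.card ≤ s) (j : Fin d) (hj : j ∉ S) :
    ∑ i : S, |((((Xᵀ * X).submatrix (Subtype.val : S → Fin d) Subtype.val)⁻¹ *ᵥ
        fun i : S => (Xᵀ * X) i.1 j) i)| ≤ Real.sqrt (2 * s * ε / (1 - ε)) := by
  obtain ⟨hε0, hε1⟩ := hε
  set M : Matrix (Fin d) (Fin d) ℝ := Xᵀ * X with hMdef
  set A : Matrix S S ℝ := M.submatrix (Subtype.val : S → Fin d) Subtype.val with hAdef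
  set b : S → ℝ := fun i : S => M i.1 j with hbdef
  have hMsym : ∀ p q : Fin d, M p q = M q p := by
    intro p q
    have : Mᵀ = M := by rw [hMdef, transpose_mul, transpose_transpose]
    conv_lhs => rw [← this]
    rfl
  -- quadratic form over S
  have hquadS : ∀ θ : S → ℝ, θ ⬝ᵥ (A *ᵥ θ) = ∑ i, (X *ᵥ extS θ) i ^ 2 := by
    intro θ
    rw [← quad_eq]
    have : extS θ ⬝ᵥ (M *ᵥ extS θ) = ∑ i : S, θ i * (M *ᵥ extS θ) i.1 :=
      extS_dot θ (M *ᵥ extS θ)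
    rw [this]
    refine Finset.sum_congr rfl fun i _ => ?_
    rw [mulVec_extS]
    rfl
  -- A is positive definite
  have hApos : A.PosDef := by
    rw [Matrix.posDef_iff_dotProduct_mulVec]
    constructor
    · exact (Matrix.isHermitian_conjTranspose_mul_self X).submatrix _
    · intro x hx
      have hsup : {i | extS x i ≠ 0}.ncard ≤ s + 1 :=
        le_trans (extS_support x) (le_trans hcard (Nat.le_succ s))
      have hrip := (hX (extS x) hsup).1
      have hx2 : 0 < ∑ i : S, x i ^ 2 := by
        have : ∃ i, x i ≠ 0 := Function.ne_iff.mp hx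
        obtain ⟨i, hi⟩ := this
        exact Finset.sum_pos' (fun k _ => sq_nonneg _)
          ⟨i, Finset.mem_univ i, by positivity⟩
      have : star x ⬝ᵥ (A *ᵥ x) = ∑ i, (X *ᵥ extS x) i ^ 2 := by
        rw [show (star x : S → ℝ) = x from rfl, hquadS]
      rw [this]
      rw [extS_sq_sum] at hrip
      nlinarith
  have hdet : IsUnit A.det := hApos.det_pos.ne'.isUnit
  set v : S → ℝ := A⁻¹ *ᵥ b with hvdef
  have hAv : A *ᵥ v = b := by
    rw [hvdef, mulVec_mulVec, Matrix.mul_nonsing_inv A hdet, one_mulVec]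
  -- the full vector
  set e : Fin d → ℝ := Pi.single j 1 with hedef
  set θ : Fin d → ℝ := extS v - e with hθdef
  have hθval : ∀ i, θ i = extS v i - e i := fun i => rfl
  -- support of θ
  have hθsup : {i | θ i ≠ 0}.ncard ≤ s + 1 := by
    have hsub : {i | θ i ≠ 0} ⊆ ((insert j S : Finset (Fin d)) : Set (Fin d)) := by
      intro i hi
      by_contra h
      simp only [Finset.coe_insert, Set.mem_insert_iff, Finset.mem_coe, not_or] at h
      exact hi (by simp [hθval, extS, hedef, h.1, h.2, Pi.single_eq_of_ne h.1])
    calc {i | θ i ≠ 0}.ncard ≤ ((insert j S : Finset (Fin d)) : Set (Fin d)).ncard :=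
          Set.ncard_le_ncard hsub (Finset.finite_toSet _)
      _ = (insert j S).card := Set.ncard_coe_finset _
      _ = S.card + 1 := Finset.card_insert_of_notMem hj
      _ ≤ s + 1 := by omega
  -- cross term vanishing and sums
  have hev0 : ∑ i, extS v i * e i = 0 := by
    rw [extS_dot]
    refine Finset.sum_eq_zero fun i _ => ?_
    have : (i : Fin d) ≠ j := fun h => hj (h ▸ i.2)
    simp [hedef, Pi.single_eq_of_ne this]
  have he2 : ∑ i, e i ^ 2 = 1 := by
    rw [hedef]
    rw [Finset.sum_eq_single j]
    · simp
    · intro k _ hk; simp [Pi.single_eq_of_ne hk]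
    · simp
  have hθ2 : ∑ i, θ i ^ 2 = (∑ i : S, v i ^ 2) + 1 := by
    have : ∀ i, θ i ^ 2 = extS v i ^ 2 - 2 * (extS v i * e i) + e i ^ 2 := by
      intro i; rw [hθval]; ring
    rw [Finset.sum_congr rfl fun i _ => this i]
    rw [Finset.sum_add_distrib, Finset.sum_sub_distrib, ← Finset.mul_sum, hev0, he2,
      extS_sq_sum]
    ring
  -- dot products
  have hMe : M *ᵥ e = fun i => M i j := by
    funext i
    rw [hedef]
    simp [mulVec_single]
  have hEvMe : extS v ⬝ᵥ (M *ᵥ e) = v ⬝ᵥ b := by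
    rw [hMe]
    exact extS_dot v _
  have heMEv : e ⬝ᵥ (M *ᵥ extS v) = v ⬝ᵥ b := by
    rw [hedef, single_dotProduct, one_mul, mulVec_extS]
    rw [show v ⬝ᵥ b = ∑ k : S, v k * M k.1 j from rfl]
    exact Finset.sum_congr rfl fun k _ => by rw [hMsym j k.1]; ring
  have hEvMEv : extS v ⬝ᵥ (M *ᵥ extS v) = v ⬝ᵥ b := by
    have h1 : extS v ⬝ᵥ (M *ᵥ extS v) = v ⬝ᵥ (A *ᵥ v) := by
      refine (extS_dot v (M *ᵥ extS v)).trans ?_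
      refine Finset.sum_congr rfl fun i _ => ?_
      rw [mulVec_extS]
      rfl
    rw [h1, hAv]
  have heMe : e ⬝ᵥ (M *ᵥ e) = M j j := by
    rw [hMe, hedef, single_dotProduct, one_mul]
  -- quadratic form of θ
  have hQ : ∑ i, (X *ᵥ θ) i ^ 2 = M j j - v ⬝ᵥ b := by
    rw [← quad_eq, hθdef, mulVec_sub, sub_dotProduct, dotProduct_sub, dotProduct_sub,
      hEvMEv, hEvMe, heMEv, heMe]
    ring
  -- RIP inequalities
  have hripθ := (hX θ hθsup).1
  have hripe := (hX e (by
    have : {i | e i ≠ 0} ⊆ {j} := by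
      intro i hi
      by_contra h
      exact hi (by simp only [Set.mem_singleton_iff] at h; simp [hedef, Pi.single_eq_of_ne h])
    calc {i | e i ≠ 0}.ncard ≤ ({j} : Set (Fin d)).ncard :=
          Set.ncard_le_ncard this (Set.finite_singleton j)
      _ = 1 := Set.ncard_singleton j
      _ ≤ s + 1 := by omega)).2
  have hripv := (hX (extS v) (le_trans (extS_support v) (by omega))).1
  rw [hθ2, hQ] at hripθ
  rw [he2] at hripe
  rw [extS_sq_sum] at hripv
  have hMjj : M j j = ∑ i, (X *ᵥ e) i ^ 2 := by rw [← quad_eq, heMe]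
  have hvb : v ⬝ᵥ b = ∑ i, (X *ᵥ extS v) i ^ 2 := by
    rw [← hAv]; exact hquadS v
  -- key bound on ∑ v²
  have hT : ∑ i : S, v i ^ 2 ≤ ε / (1 - ε) := by
    rw [hMjj, hvb] at hripθ
    rw [le_div_iff₀ (by linarith : (0:ℝ) < 1 - ε)]
    nlinarith
  -- Cauchy–Schwarz and conclusion
  have hG : (∑ i : S, |v i|) ^ 2 ≤ (S.card : ℝ) * ∑ i : S, v i ^ 2 := by
    have := sq_sum_le_card_mul_sum_sq (s := (Finset.univ : Finset S))
      (f := fun i => |v i|)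
    simpa [Finset.card_univ, sq_abs] using this
  have hGnn : 0 ≤ ∑ i : S, |v i| := Finset.sum_nonneg fun i _ => abs_nonneg _
  have htgt : 0 ≤ 2 * (s : ℝ) * ε / (1 - ε) :=
    div_nonneg (by positivity) (by linarith)
  rw [Real.le_sqrt hGnn htgt]
  calc (∑ i : S, |v i|) ^ 2 ≤ (S.card : ℝ) * ∑ i : S, v i ^ 2 := hG
    _ ≤ (s : ℝ) * (ε / (1 - ε)) := by
        apply mul_le_mul (by exact_mod_cast hcard) hT
          (Finset.sum_nonneg fun i _ => sq_nonneg _) (Nat.cast_nonneg s)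
    _ ≤ 2 * s * ε / (1 - ε) := by
        have h2 : 0 ≤ (s : ℝ) * (ε / (1 - ε)) :=
          mul_nonneg (Nat.cast_nonneg s) (div_nonneg hε0.le (by linarith))
        have h3 : 2 * (s : ℝ) * ε / (1 - ε) = 2 * ((s : ℝ) * (ε / (1 - ε))) := by ring
        rw [h3]
        linarith
end

section
/- Let X ∈ ℝ^{n×d} be (ε, k+1)-RIP with ε ∈ (0,1), let S ⊆ [d] with |S| ≤ k, and let M = [XᵀX]_{S×S}⁻¹. Then the ℓ∞→ℓ∞ operator norm of M satisfies ‖M‖_{∞→∞} ≤ 1/(1-ε) + 2√(kε)/(1-ε²). -/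
set_option maxHeartbeats 1000000

open Matrix

lemma dotsymm {ι : Type*} [Fintype ι] (A : Matrix ι ι ℝ) (hA : Aᵀ = A) (u v : ι → ℝ) :
    u ⬝ᵥ (A *ᵥ v) = v ⬝ᵥ (A *ᵥ u) := by
  rw [Matrix.dotProduct_mulVec, ← Matrix.mulVec_transpose, hA, dotProduct_comm]

lemma keylem {ι : Type*} [Fintype ι] (A : Matrix ι ι ℝ) (hA : Aᵀ = A) (ε : ℝ) (hε0 : 0 < ε)
    (hq : ∀ w : ι → ℝ, (1 - ε) * (w ⬝ᵥ w) ≤ w ⬝ᵥ (A *ᵥ w) ∧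
        w ⬝ᵥ (A *ᵥ w) ≤ (1 + ε) * (w ⬝ᵥ w)) (v : ι → ℝ) :
    (A *ᵥ v - v) ⬝ᵥ (A *ᵥ v - v) ≤ ε ^ 2 * (v ⬝ᵥ v) := by
  set u : ι → ℝ := A *ᵥ v - v with hu
  have hAv : A *ᵥ v = u + v := by simp [hu]
  have huAv : u ⬝ᵥ (A *ᵥ v) = u ⬝ᵥ u + u ⬝ᵥ v := by rw [hAv, dotProduct_add]
  have hvAu : v ⬝ᵥ (A *ᵥ u) = u ⬝ᵥ u + u ⬝ᵥ v := by rw [← dotsymm A hA, huAv]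
  have hvu : v ⬝ᵥ u = u ⬝ᵥ v := dotProduct_comm v u
  have h1 := (hq (ε • v + u)).2
  have h2 := (hq (ε • v - u)).1
  have e1 : (ε • v + u) ⬝ᵥ (A *ᵥ (ε • v + u)) =
      ε ^ 2 * (v ⬝ᵥ (A *ᵥ v)) + 2 * ε * (u ⬝ᵥ u + u ⬝ᵥ v) + u ⬝ᵥ (A *ᵥ u) := by
    simp only [Matrix.mulVec_add, Matrix.mulVec_smul, dotProduct_add, add_dotProduct,
      dotProduct_smul, smul_dotProduct, smul_eq_mul, huAv, hvAu]
    ring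
  have e2 : (ε • v - u) ⬝ᵥ (A *ᵥ (ε • v - u)) =
      ε ^ 2 * (v ⬝ᵥ (A *ᵥ v)) - 2 * ε * (u ⬝ᵥ u + u ⬝ᵥ v) + u ⬝ᵥ (A *ᵥ u) := by
    simp only [Matrix.mulVec_sub, Matrix.mulVec_smul, dotProduct_sub, sub_dotProduct,
      dotProduct_smul, smul_dotProduct, smul_eq_mul, huAv, hvAu]
    ring
  have n1 : (ε • v + u) ⬝ᵥ (ε • v + u) = ε ^ 2 * (v ⬝ᵥ v) + 2 * ε * (u ⬝ᵥ v) + u ⬝ᵥ u := by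
    simp only [dotProduct_add, add_dotProduct, dotProduct_smul, smul_dotProduct,
      smul_eq_mul, hvu]
    ring
  have n2 : (ε • v - u) ⬝ᵥ (ε • v - u) = ε ^ 2 * (v ⬝ᵥ v) - 2 * ε * (u ⬝ᵥ v) + u ⬝ᵥ u := by
    simp only [dotProduct_sub, sub_dotProduct, dotProduct_smul, smul_dotProduct,
      smul_eq_mul, hvu]
    ring
  rw [e1, n1] at h1
  rw [e2, n2] at h2
  nlinarith [h1, h2, hε0]

/-- The `ℓ∞ → ℓ∞` operator norm of `M` is the maximum row `ℓ₁` norm; we state the bound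
for every row. -/
theorem stmt_6 {n d k : ℕ} (X : Matrix (Fin n) (Fin d) ℝ) (ε : ℝ)
    (hε : ε ∈ Set.Ioo (0 : ℝ) 1) (hX : IsRIP X ε (k + 1))
    (S : Finset (Fin d)) (hcard : S.card ≤ k)
    (M : Matrix S S ℝ)
    (hM : M = ((Xᵀ * X).submatrix (Subtype.val : S → Fin d) Subtype.val)⁻¹) :
    ∀ i : S, ∑ j : S, |M i j| ≤ 1 / (1 - ε) + 2 * Real.sqrt (k * ε) / (1 - ε ^ 2) := by
  obtain ⟨hε0, hε1⟩ := hε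
  classical
  set A : Matrix S S ℝ := (Xᵀ * X).submatrix (Subtype.val : S → Fin d) Subtype.val with hA
  -- symmetry of A
  have hsymm : Aᵀ = A := by
    ext p q
    simp only [hA, Matrix.transpose_apply, Matrix.submatrix_apply, Matrix.mul_apply,
      Matrix.transpose_apply]
    exact Finset.sum_congr rfl fun _ _ => mul_comm _ _
  -- quadratic form bounds on A from RIP
  have hquad : ∀ v : S → ℝ, (1 - ε) * (v ⬝ᵥ v) ≤ v ⬝ᵥ (A *ᵥ v) ∧
      v ⬝ᵥ (A *ᵥ v) ≤ (1 + ε) * (v ⬝ᵥ v) := by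
    intro v
    set θ : Fin d → ℝ := fun j => if h : j ∈ S then v ⟨j, h⟩ else 0 with hθ
    have hθS : ∀ x : S, θ (x : Fin d) = v x := fun x => dif_pos x.2
    have hθ0 : ∀ x : Fin d, x ∉ S → θ x = 0 := fun x hx => dif_neg hx
    have hres : ∀ f : Fin d → ℝ, (∑ j, f j * θ j) = ∑ j : S, f (j : Fin d) * v j := by
      intro f
      rw [← Finset.sum_subset (Finset.subset_univ S)
        (fun x _ hx => by rw [hθ0 x hx, mul_zero]), ← Finset.sum_attach S (fun j => f j * θ j)]
      exact Finset.sum_congr rfl fun x _ => by rw [hθS x]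
    have hsupp : {i | θ i ≠ 0}.ncard ≤ k + 1 := by
      have hsub : {i | θ i ≠ 0} ⊆ (S : Set (Fin d)) := by
        intro j hj
        by_contra h
        exact hj (hθ0 j h)
      calc {i | θ i ≠ 0}.ncard ≤ (S : Set (Fin d)).ncard :=
            Set.ncard_le_ncard hsub S.finite_toSet
        _ = S.card := Set.ncard_coe_finset S
        _ ≤ k + 1 := by omega
    have h := hX θ hsupp
    have hθ2 : ∑ j, θ j ^ 2 = v ⬝ᵥ v := by
      have h2' : ∑ j, θ j * θ j = ∑ j : S, v j * v j := by
        rw [hres θ]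
        exact Finset.sum_congr rfl fun x _ => by rw [hθS x]
      simp only [dotProduct, ← h2']
      exact Finset.sum_congr rfl fun x _ => pow_two (θ x)
    have hXθ : ∑ i, (X *ᵥ θ) i ^ 2 = v ⬝ᵥ (A *ᵥ v) := by
      have step1 : ∑ i, (X *ᵥ θ) i ^ 2 = θ ⬝ᵥ ((Xᵀ * X) *ᵥ θ) := by
        rw [← Matrix.mulVec_mulVec, Matrix.dotProduct_mulVec, Matrix.vecMul_transpose]
        simp only [dotProduct, sq]
      have step2 : ∀ p : S, ((Xᵀ * X) *ᵥ θ) (p : Fin d) = (A *ᵥ v) p := by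
        intro p
        simp only [Matrix.mulVec, dotProduct, hA, Matrix.submatrix_apply]
        exact hres (fun q => (Xᵀ * X) (p : Fin d) q)
      rw [step1]
      have : θ ⬝ᵥ ((Xᵀ * X) *ᵥ θ) = ∑ j : S, ((Xᵀ * X) *ᵥ θ) (j : Fin d) * v j := by
        simp only [dotProduct]
        rw [← hres (fun j => ((Xᵀ * X) *ᵥ θ) j)]
        exact Finset.sum_congr rfl fun x _ => mul_comm _ _
      rw [this]
      simp only [dotProduct]
      exact Finset.sum_congr rfl fun x _ => by rw [step2 x, mul_comm]
    rw [hθ2, hXθ] at h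
    exact h
  -- A is positive definite
  have hpos : ∀ v : S → ℝ, v ≠ 0 → 0 < v ⬝ᵥ (A *ᵥ v) := by
    intro v hv
    have hvv : 0 < v ⬝ᵥ v := by
      obtain ⟨i, hi⟩ := Function.ne_iff.mp hv
      simp only [Pi.zero_apply] at hi
      exact Finset.sum_pos' (fun j _ => mul_self_nonneg (v j))
        ⟨i, Finset.mem_univ i, mul_self_pos.mpr hi⟩
    calc (0 : ℝ) < (1 - ε) * (v ⬝ᵥ v) := by nlinarith
      _ ≤ v ⬝ᵥ (A *ᵥ v) := (hquad v).1
  have hherm : A.IsHermitian := by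
    have : Aᴴ = Aᵀ := by
      ext p q
      simp [Matrix.conjTranspose_apply]
    rw [Matrix.IsHermitian, this, hsymm]
  have hpd : A.PosDef := Matrix.PosDef.of_dotProduct_mulVec_pos hherm fun x hx => by simpa using hpos x hx
  have hdet : IsUnit A.det := isUnit_iff_ne_zero.mpr (ne_of_gt hpd.det_pos)
  have hAM : A * M = 1 := by rw [hM]; exact Matrix.mul_nonsing_inv A hdet
  have hMsymm : Mᵀ = M := by
    rw [hM, Matrix.transpose_nonsing_inv, hsymm]
  have hMji : ∀ i j : S, M j i = M i j := by
    intro i j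
    conv_lhs => rw [← hMsymm]
    rfl
  -- key spectral-type inequality
  have hkey := keylem A hsymm ε hε0 hquad
  intro i
  -- apply to u := column i of M
  set u : S → ℝ := M *ᵥ Pi.single i 1 with hudef
  have hAu : A *ᵥ u = Pi.single i 1 := by
    rw [hudef, Matrix.mulVec_mulVec, hAM, Matrix.one_mulVec]
  have huj : ∀ j : S, u j = M i j := by
    intro j
    simp [hudef, Matrix.mulVec, dotProduct_single, hMji]
  have hk := hkey u
  rw [hAu] at hk
  set q : ℝ := M i i with hq
  set r2 : ℝ := ∑ j : S, (M i j) ^ 2 with hr2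
  have huu : u ⬝ᵥ u = r2 := by
    simp only [dotProduct, hr2]
    exact Finset.sum_congr rfl fun j _ => by rw [huj j, sq]
  have hF1 : 1 - 2 * q + r2 ≤ ε ^ 2 * r2 := by
    have hlhs : (Pi.single i 1 - u) ⬝ᵥ (Pi.single i 1 - u) = 1 - 2 * q + r2 := by
      have e1 : Pi.single i (1 : ℝ) ⬝ᵥ u = u i := by simp
      have e2 : u ⬝ᵥ Pi.single i (1 : ℝ) = u i := by simp
      have e3 : Pi.single i (1 : ℝ) ⬝ᵥ Pi.single i (1 : ℝ) = 1 := by simp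
      simp only [dotProduct_sub, sub_dotProduct, huu, e1, e2, e3, huj i]
      ring
    rw [hlhs, huu] at hk
    exact hk
  have hq2r2 : q ^ 2 ≤ r2 := by
    rw [hr2, hq]
    exact Finset.single_le_sum (f := fun j => (M i j) ^ 2)
      (fun j _ => sq_nonneg _) (Finset.mem_univ i)
  -- diagonal bounds
  have hε2 : (0 : ℝ) < 1 - ε ^ 2 := by nlinarith
  have hr2nn : 0 ≤ r2 := le_trans (sq_nonneg q) hq2r2
  have hqpos : 0 < q := by nlinarith [hF1, mul_nonneg hε2.le hr2nn]
  have hqub : q ≤ 1 / (1 - ε) := by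
    rw [le_div_iff₀ (by linarith)]
    nlinarith [mul_le_mul_of_nonneg_left hq2r2 hε2.le, hF1, hqpos,
      mul_pos hε0 hqpos, sq_nonneg ((1 - ε) * q - 1)]
  -- off-diagonal mass
  have hoffs : (1 - ε ^ 2) ^ 2 * (r2 - q ^ 2) ≤ ε ^ 2 := by
    nlinarith [sq_nonneg ((1 - ε ^ 2) * q - 1), mul_le_mul_of_nonneg_left hF1 hε2.le]
  have hoff : r2 - q ^ 2 ≤ ε ^ 2 / (1 - ε ^ 2) ^ 2 := by
    rw [le_div_iff₀ (by positivity)]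
    nlinarith [hoffs]
  -- final assembly
  have hsplit : ∑ j : S, |M i j| = (∑ j ∈ Finset.univ.erase i, |M i j|) + |M i i| :=
    (Finset.sum_erase_add _ _ (Finset.mem_univ i)).symm
  have hqi : |M i i| = q := abs_of_pos hqpos
  set t : ℝ := ∑ j ∈ Finset.univ.erase i, |M i j| with ht
  have ht0 : 0 ≤ t := Finset.sum_nonneg fun j _ => abs_nonneg _
  have hcs : t ^ 2 ≤ ((Finset.univ.erase i).card : ℝ) *
      ∑ j ∈ Finset.univ.erase i, |M i j| ^ 2 := by
    exact_mod_cast sq_sum_le_card_mul_sum_sq (s := Finset.univ.erase i)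
      (f := fun j => |M i j|)
  have hsum_erase : ∑ j ∈ Finset.univ.erase i, |M i j| ^ 2 = r2 - q ^ 2 := by
    have h : (∑ j ∈ Finset.univ.erase i, (M i j) ^ 2) + (M i i) ^ 2
        = ∑ j : S, (M i j) ^ 2 :=
      Finset.sum_erase_add _ _ (Finset.mem_univ i)
    simp only [sq_abs]
    rw [hr2, hq]
    linarith [h]
  have hcardle : ((Finset.univ.erase i).card : ℝ) ≤ (k : ℝ) := by
    have h1 : (Finset.univ.erase i).card = Fintype.card S - 1 := by
      rw [Finset.card_erase_of_mem (Finset.mem_univ i), Finset.card_univ]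
    have h2 : Fintype.card S = S.card := Fintype.card_coe S
    have h3 : (Finset.univ.erase i).card ≤ k := by omega
    exact_mod_cast h3
  have hoffnn : 0 ≤ r2 - q ^ 2 := by
    rw [← hsum_erase]
    exact Finset.sum_nonneg fun j _ => sq_nonneg _
  have ht2 : t ^ 2 ≤ (k : ℝ) * (ε ^ 2 / (1 - ε ^ 2) ^ 2) := by
    calc t ^ 2 ≤ ((Finset.univ.erase i).card : ℝ) * (r2 - q ^ 2) := by
          rw [← hsum_erase]; exact hcs
      _ ≤ (k : ℝ) * (ε ^ 2 / (1 - ε ^ 2) ^ 2) := by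
          apply mul_le_mul hcardle hoff hoffnn (Nat.cast_nonneg k)
  have htle : t ≤ 2 * Real.sqrt (k * ε) / (1 - ε ^ 2) := by
    have hR0 : (0 : ℝ) ≤ 2 * Real.sqrt ((k : ℝ) * ε) / (1 - ε ^ 2) := by
      positivity
    have hRsq : (2 * Real.sqrt ((k : ℝ) * ε) / (1 - ε ^ 2)) ^ 2 =
        4 * ((k : ℝ) * ε) / (1 - ε ^ 2) ^ 2 := by
      rw [div_pow, mul_pow, Real.sq_sqrt (by positivity)]
      ring
    have ht2' : t ^ 2 ≤ (2 * Real.sqrt ((k : ℝ) * ε) / (1 - ε ^ 2)) ^ 2 := by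
      rw [hRsq]
      calc t ^ 2 ≤ (k : ℝ) * (ε ^ 2 / (1 - ε ^ 2) ^ 2) := ht2
        _ = ((k : ℝ) * ε ^ 2) / (1 - ε ^ 2) ^ 2 := by ring
        _ ≤ 4 * ((k : ℝ) * ε) / (1 - ε ^ 2) ^ 2 := by
            have h4 : (0 : ℝ) ≤ (k : ℝ) * ε * (4 - ε) :=
              mul_nonneg (mul_nonneg (Nat.cast_nonneg (α := ℝ) k) hε0.le)
                (by linarith)
            have hnum : (k : ℝ) * ε ^ 2 ≤ 4 * ((k : ℝ) * ε) := by nlinarith [h4]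
            rw [div_le_div_iff₀ (by positivity) (by positivity)]
            nlinarith [hnum, sq_nonneg (1 - ε ^ 2)]
    calc t = Real.sqrt (t ^ 2) := (Real.sqrt_sq ht0).symm
      _ ≤ Real.sqrt ((2 * Real.sqrt ((k : ℝ) * ε) / (1 - ε ^ 2)) ^ 2) :=
          Real.sqrt_le_sqrt ht2'
      _ = 2 * Real.sqrt ((k : ℝ) * ε) / (1 - ε ^ 2) := Real.sqrt_sq hR0
  rw [hsplit, hqi]
  linarith [htle, hqub]
end

section
/- In the spike-and-slab Bayesian linear regression model, let θ be a sample from the posterior π(· | X, y). Then for any diffuse density μ and any δ ∈ (0,1), with probability at least 1 - δ (over the joint randomness of the model and the posterior sample), |supp(θ)| ≤ 6(k + log(3/δ)), where k = ‖q‖₁ is the expected sparsity of the prior. -/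
open Matrix MeasureTheory ProbabilityTheory
open scoped NNReal ENNReal

/-- The spike-and-slab prior `⊗ᵢ ((1-qᵢ)δ₀ + qᵢ μ₀)` on `ℝ^d`. -/
noncomputable def spikeSlabPrior {d : ℕ} (q : Fin d → ℝ) (μ0 : Measure ℝ) :
    Measure (Fin d → ℝ) :=
  Measure.pi fun i =>
    ENNReal.ofReal (1 - q i) • Measure.dirac (0 : ℝ) + ENNReal.ofReal (q i) • μ0

/-- The (normalized) posterior `π(· | X, y) ∝ exp(-‖y - Xθ‖²/(2σ²)) π(θ)`. -/
noncomputable def spikeSlabPosterior {n d : ℕ} (q : Fin d → ℝ) (μ0 : Measure ℝ)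
    (σ : ℝ) (X : Matrix (Fin n) (Fin d) ℝ) (y : Fin n → ℝ) : Measure (Fin d → ℝ) :=
  let unnorm := (spikeSlabPrior q μ0).withDensity fun θ =>
    ENNReal.ofReal (Real.exp (-(∑ i, ((y - X *ᵥ θ) i) ^ 2) / (2 * σ ^ 2)))
  (unnorm Set.univ)⁻¹ • unnorm

/-- The joint law of a posterior sample `θ`, where `θ* ∼ π`, `ξ ∼ N(0, σ²I_n)` independent,
`y = Xθ* + ξ`, and `θ ∼ π(· | X, y)`. -/
noncomputable def posteriorSampleLaw {n d : ℕ} (q : Fin d → ℝ) (μ0 : Measure ℝ)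
    (σ : ℝ) (X : Matrix (Fin n) (Fin d) ℝ) : Measure (Fin d → ℝ) :=
  ((spikeSlabPrior q μ0).prod
      (Measure.pi fun _ : Fin n => gaussianReal 0 ⟨σ ^ 2, sq_nonneg σ⟩)).bind
    fun p => spikeSlabPosterior q μ0 σ X (X *ᵥ p.1 + p.2)

theorem prior_factor_prob {d : ℕ} (q : Fin d → ℝ) (hq : ∀ i, q i ∈ Set.Icc (0 : ℝ) 1)
    (μ0 : Measure ℝ) [IsProbabilityMeasure μ0] (i : Fin d) :
    IsProbabilityMeasure (ENNReal.ofReal (1 - q i) • Measure.dirac (0 : ℝ)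
      + ENNReal.ofReal (q i) • μ0) := by
  constructor
  simp only [Measure.add_apply, Measure.smul_apply, smul_eq_mul, measure_univ, mul_one]
  rw [← ENNReal.ofReal_add (by linarith [(hq i).2]) (hq i).1]
  norm_num

theorem prior_prob {d : ℕ} (q : Fin d → ℝ) (hq : ∀ i, q i ∈ Set.Icc (0 : ℝ) 1)
    (μ0 : Measure ℝ) [IsProbabilityMeasure μ0] :
    IsProbabilityMeasure (spikeSlabPrior q μ0) := by
  haveI := prior_factor_prob q hq μ0
  rw [spikeSlabPrior]
  infer_instance

theorem my_lintegral_fin_prod {n : ℕ} {E : Fin n → Type*} [∀ i, MeasurableSpace (E i)]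
    (μ : ∀ i, Measure (E i)) [∀ i, SigmaFinite (μ i)]
    (f : ∀ i, E i → ENNReal) (hf : ∀ i, Measurable (f i)) :
    ∫⁻ x, ∏ i, f i (x i) ∂Measure.pi μ = ∏ i, ∫⁻ x, f i x ∂μ i := by
  induction n with
  | zero => simp [lintegral_const, Measure.pi_univ]
  | succ n ih =>
    have h := (measurePreserving_piFinSuccAbove μ 0).symm
    rw [← h.lintegral_comp (f := fun x => ∏ i, f i (x i))
      (Finset.measurable_prod _ fun i _ => (hf i).comp (measurable_pi_apply i))]
    simp_rw [MeasurableEquiv.piFinSuccAbove_symm_apply, Fin.insertNthEquiv,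
      Fin.prod_univ_succ, Fin.insertNth_zero]
    simp only [Fin.zero_succAbove, Function.comp_def, Fin.cons_zero, Fin.cons_succ, cast_eq,
      Equiv.coe_fn_mk]
    have key := lintegral_prod_mul (μ := μ 0) (ν := Measure.pi fun j => μ (Fin.succAbove 0 j))
      (f := f 0) (g := fun b : (j : Fin n) → E (Fin.succAbove 0 j) => ∏ x : Fin n, f (Fin.succAbove 0 x) (b x))
      (hf 0).aemeasurable
      (Finset.measurable_prod _ fun i _ => (hf _).comp (measurable_pi_apply i)).aemeasurable
    erw [key]
    exact congrArg _ (ih (fun i => μ (Fin.succAbove 0 i)) (fun i => f (Fin.succAbove 0 i)) (fun i => hf _))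

theorem my_indicator_pi_prod {n : ℕ} {E : Fin n → Type*} (s : ∀ i, Set (E i))
    (f : ∀ i, E i → ENNReal) (x : ∀ i, E i) :
    (Set.pi Set.univ s).indicator (fun x => ∏ i, f i (x i)) x
      = ∏ i, (s i).indicator (f i) (x i) := by
  by_cases hx : x ∈ Set.pi Set.univ s
  · rw [Set.indicator_of_mem hx]
    exact Finset.prod_congr rfl fun i _ =>
      (Set.indicator_of_mem (hx i (Set.mem_univ i)) _).symm
  · rw [Set.indicator_of_notMem hx]
    simp only [Set.mem_pi, Set.mem_univ, forall_true_left, not_forall] at hx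
    obtain ⟨i, hi⟩ := hx
    exact (Finset.prod_eq_zero (Finset.mem_univ i) (Set.indicator_of_notMem hi _)).symm

theorem my_gauss_pi_eq {n : ℕ} (v : ℝ≥0) (hv : v ≠ 0) :
    (Measure.pi fun _ : Fin n => gaussianReal 0 v)
      = (volume : Measure (Fin n → ℝ)).withDensity (fun ξ => ∏ i, gaussianPDF 0 v (ξ i)) := by
  apply Measure.pi_eq
  intro s hs
  rw [withDensity_apply _ (MeasurableSet.univ_pi hs), ← lintegral_indicator (MeasurableSet.univ_pi hs) _]
  simp_rw [my_indicator_pi_prod s (fun _ => gaussianPDF 0 v)]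
  rw [volume_pi, my_lintegral_fin_prod _ _
    (fun i => (measurable_gaussianPDF 0 v).indicator (hs i))]
  exact Finset.prod_congr rfl fun i _ => by
    rw [lintegral_indicator (hs i) _, ← gaussianReal_apply 0 hv (s i)]

theorem bayes_abstract {E F : Type*} [MeasurableSpace E] [MeasurableSpace F]
    (π : Measure E) [IsProbabilityMeasure π] (lam : Measure F) [SigmaFinite lam]
    (γ : Measure F) [SFinite γ]
    (g : E → F → ℝ≥0∞) (mg : Measurable fun p : E × F => g p.1 p.2)
    (hgle : ∀ θ y, g θ y ≤ 1) (hgpos : ∀ θ y, g θ y ≠ 0)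
    (T : E → F → F) (mT : Measurable fun p : E × F => T p.1 p.2)
    (c : ℝ≥0∞)
    (h1 : ∀ (θ' : E) (h : F → ℝ≥0∞), Measurable h →
      ∫⁻ ξ, h (T θ' ξ) ∂γ = ∫⁻ y, h y * (c * g θ' y) ∂lam)
    (h2 : ∀ θ : E, ∫⁻ y, c * g θ y ∂lam = 1)
    {A : Set E} (hA : MeasurableSet A) :
    ∫⁻ p : E × F, ((∫⁻ θ, g θ (T p.1 p.2) ∂π)⁻¹ * ∫⁻ θ in A, g θ (T p.1 p.2) ∂π) ∂(π.prod γ)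
      = π A := by
  set Z : F → ℝ≥0∞ := fun y => ∫⁻ θ, g θ y ∂π with hZ_def
  set W : F → ℝ≥0∞ := fun y => ∫⁻ θ in A, g θ y ∂π with hW_def
  have mZ : Measurable Z := mg.lintegral_prod_left'
  have mgy : ∀ y, Measurable fun θ => g θ y := fun y =>
    mg.comp (measurable_id.prodMk measurable_const)
  have mW : Measurable W := by
    have mf' : Measurable fun p : E × F => (A ×ˢ (Set.univ : Set F)).indicator
        (fun p : E × F => g p.1 p.2) p := mg.indicator (hA.prod MeasurableSet.univ)
    have : W = fun y => ∫⁻ θ, (A ×ˢ (Set.univ : Set F)).indicator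
        (fun p : E × F => g p.1 p.2) (θ, y) ∂π := by
      funext y
      show (∫⁻ θ in A, g θ y ∂π) = _
      rw [← lintegral_indicator hA]
      congr 1 with θ
      by_cases hθ : θ ∈ A <;> simp [Set.indicator, hθ]
    rw [this]
    exact mf'.lintegral_prod_left'
  have mH : Measurable fun y => (Z y)⁻¹ * W y := mZ.inv.mul mW
  have hZtop : ∀ y, Z y ≠ ⊤ := by
    intro y
    have : Z y ≤ 1 := by
      rw [hZ_def]
      calc ∫⁻ θ, g θ y ∂π ≤ ∫⁻ _, 1 ∂π := lintegral_mono fun θ => hgle θ y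
        _ = 1 := by simp [lintegral_one]
    exact ne_top_of_le_ne_top ENNReal.one_ne_top this
  have hZ0 : ∀ y, Z y ≠ 0 := by
    intro y
    rw [hZ_def]
    refine (lintegral_pos_iff_support (mgy y)).mpr ?_ |>.ne'
    have : Function.support (fun θ => g θ y) = Set.univ := by
      ext θ; simp [Function.support, hgpos θ y]
    rw [this]
    simp
  calc ∫⁻ p : E × F, ((Z (T p.1 p.2))⁻¹ * W (T p.1 p.2)) ∂(π.prod γ)
      = ∫⁻ θ', ∫⁻ ξ, (Z (T θ' ξ))⁻¹ * W (T θ' ξ) ∂γ ∂π := by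
        exact lintegral_prod (fun p : E × F => (Z (T p.1 p.2))⁻¹ * W (T p.1 p.2))
          ((mH.comp mT).aemeasurable)
    _ = ∫⁻ θ', ∫⁻ y, ((Z y)⁻¹ * W y) * (c * g θ' y) ∂lam ∂π := by
        congr 1 with θ'
        exact h1 θ' _ mH
    _ = ∫⁻ y, ∫⁻ θ', ((Z y)⁻¹ * W y) * (c * g θ' y) ∂π ∂lam := by
        apply lintegral_lintegral_swap
        exact (((mH.comp measurable_snd).mul
          (measurable_const.mul mg)) : Measurable fun p : E × F =>
            ((Z p.2)⁻¹ * W p.2) * (c * g p.1 p.2)).aemeasurable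
    _ = ∫⁻ y, c * W y ∂lam := by
        congr 1 with y
        rw [show (fun θ' => ((Z y)⁻¹ * W y) * (c * g θ' y))
            = fun θ' => ((Z y)⁻¹ * W y * c) * g θ' y by funext θ'; ring]
        rw [lintegral_const_mul _ (mgy y)]
        calc (Z y)⁻¹ * W y * c * Z y = (Z y)⁻¹ * Z y * (c * W y) := by ring
          _ = c * W y := by rw [ENNReal.inv_mul_cancel (hZ0 y) (hZtop y), one_mul]
    _ = ∫⁻ y, ∫⁻ θ in A, c * g θ y ∂π ∂lam := by
        congr 1 with y
        rw [hW_def]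
        exact (lintegral_const_mul c (mgy y)).symm
    _ = ∫⁻ θ in A, ∫⁻ y, c * g θ y ∂lam ∂π := by
        exact lintegral_lintegral_swap (f := fun (y : F) (θ : E) => c * g θ y)
          ((measurable_const.mul (mg.comp measurable_swap) : Measurable fun p : F × E =>
            c * g p.2 p.1)).aemeasurable
    _ = ∫⁻ θ in A, 1 ∂π := by
        apply lintegral_congr
        exact fun θ => h2 θ
    _ = π A := setLIntegral_one A

theorem posterior_marginal {n d : ℕ} (q : Fin d → ℝ) (hq : ∀ i, q i ∈ Set.Icc (0 : ℝ) 1)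
    (μ0 : Measure ℝ) [IsProbabilityMeasure μ0] (σ : ℝ) (hσ : 0 < σ)
    (X : Matrix (Fin n) (Fin d) ℝ) {A : Set (Fin d → ℝ)} (hA : MeasurableSet A) :
    posteriorSampleLaw q μ0 σ X A = spikeSlabPrior q μ0 A := by
  haveI := prior_prob q hq μ0
  have hσ2 : (0:ℝ) < σ ^ 2 := by positivity
  set v : ℝ≥0 := ⟨σ ^ 2, sq_nonneg σ⟩ with hv_def
  have hv : v ≠ 0 := by
    intro h
    have h2 : (v : ℝ) = 0 := by rw [h]; rfl
    rw [hv_def] at h2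
    exact hσ2.ne' h2
  have hvc : (v : ℝ) = σ ^ 2 := rfl
  set g : (Fin d → ℝ) → (Fin n → ℝ) → ℝ≥0∞ := fun θ y =>
    ENNReal.ofReal (Real.exp (-(∑ i, ((y - X *ᵥ θ) i) ^ 2) / (2 * σ ^ 2))) with hg_def
  -- measurability of g
  have contg : Continuous fun p : (Fin d → ℝ) × (Fin n → ℝ) =>
      Real.exp (-(∑ i, ((p.2 - X *ᵥ p.1) i) ^ 2) / (2 * σ ^ 2)) := by
    apply Real.continuous_exp.comp
    apply Continuous.div_const
    apply Continuous.neg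
    apply continuous_finset_sum
    intro i _
    apply Continuous.pow
    show Continuous fun p : (Fin d → ℝ) × (Fin n → ℝ) => p.2 i - ∑ j, X i j * p.1 j
    exact ((continuous_apply i).comp continuous_snd).sub
      (continuous_finset_sum _ fun j _ =>
        continuous_const.mul ((continuous_apply j).comp continuous_fst))
  have mg : Measurable fun p : (Fin d → ℝ) × (Fin n → ℝ) => g p.1 p.2 :=
    ENNReal.measurable_ofReal.comp contg.measurable
  have hgle : ∀ θ y, g θ y ≤ 1 := by
    intro θ y
    rw [hg_def]
    refine ENNReal.ofReal_le_one.mpr (Real.exp_le_one_iff.mpr ?_)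
    apply div_nonpos_of_nonpos_of_nonneg
    · simp only [neg_nonpos]
      positivity
    · positivity
  have hgpos : ∀ θ y, g θ y ≠ 0 := by
    intro θ y
    rw [hg_def]
    simp only [ne_eq, ENNReal.ofReal_eq_zero, not_le]
    exact Real.exp_pos _
  -- the gaussian density
  set φ : (Fin n → ℝ) → ℝ≥0∞ := fun ξ => ∏ i, gaussianPDF 0 v (ξ i) with hφ_def
  have mφ : Measurable φ := Finset.measurable_prod _ fun i _ =>
    (ENNReal.measurable_ofReal.comp (measurable_gaussianPDFReal 0 v)).comp (measurable_pi_apply i)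
  set c : ℝ≥0∞ := ENNReal.ofReal ((Real.sqrt (2 * Real.pi * σ ^ 2))⁻¹ ^ n) with hc_def
  have hφg : ∀ (ξ : Fin n → ℝ),
      φ ξ = c * ENNReal.ofReal (Real.exp (-(∑ i, (ξ i) ^ 2) / (2 * σ ^ 2))) := by
    intro ξ
    rw [hφ_def]
    simp only
    have : ∀ i : Fin n, gaussianPDF 0 v (ξ i)
        = ENNReal.ofReal ((Real.sqrt (2 * Real.pi * σ ^ 2))⁻¹
            * Real.exp (-(ξ i) ^ 2 / (2 * σ ^ 2))) := by
      intro i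
      rw [gaussianPDF, gaussianPDFReal, hvc, sub_zero]
    rw [Finset.prod_congr rfl fun i _ => this i,
      ← ENNReal.ofReal_prod_of_nonneg (fun i _ => by positivity)]
    rw [Finset.prod_mul_distrib, Finset.prod_const, Finset.card_univ, Fintype.card_fin,
      ← Real.exp_sum]
    rw [ENNReal.ofReal_mul (by positivity), hc_def]
    congr 3
    rw [← Finset.sum_div, ← Finset.sum_neg_distrib]
  set γ : Measure (Fin n → ℝ) := Measure.pi fun _ : Fin n => gaussianReal 0 v with hγ_def
  have hγden : γ = (volume : Measure (Fin n → ℝ)).withDensity φ := my_gauss_pi_eq v hv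
  haveI : IsProbabilityMeasure γ := by rw [hγ_def]; infer_instance
  -- h2
  have h2 : ∀ θ : Fin d → ℝ, ∫⁻ y, c * g θ y ∂(volume : Measure (Fin n → ℝ)) = 1 := by
    intro θ
    have hpt : ∀ y, c * g θ y = φ (y - X *ᵥ θ) := by
      intro y
      rw [hφg (y - X *ᵥ θ), hg_def]
    rw [lintegral_congr hpt]
    have htrans : ∫⁻ y, φ (y - X *ᵥ θ) ∂(volume : Measure (Fin n → ℝ))
        = ∫⁻ y, φ y ∂(volume : Measure (Fin n → ℝ)) := by
      rw [volume_pi]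
      exact lintegral_sub_right_eq_self φ (X *ᵥ θ)
    rw [htrans]
    have : ∫⁻ y, φ y ∂(volume : Measure (Fin n → ℝ)) = γ Set.univ := by
      rw [hγden, withDensity_apply _ MeasurableSet.univ, setLIntegral_univ]
    rw [this, measure_univ]
  -- h1
  have h1 : ∀ (θ' : Fin d → ℝ) (h : (Fin n → ℝ) → ℝ≥0∞), Measurable h →
      ∫⁻ ξ, h (X *ᵥ θ' + ξ) ∂γ = ∫⁻ y, h y * (c * g θ' y) ∂(volume : Measure (Fin n → ℝ)) := by
    intro θ' h mh
    rw [hγden, lintegral_withDensity_eq_lintegral_mul _ mφ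
      (show Measurable fun ξ : Fin n → ℝ => h (X *ᵥ θ' + ξ) from
        mh.comp (measurable_const.add measurable_id))]
    have hpt : ∀ ξ, (φ * fun ξ => h (X *ᵥ θ' + ξ)) ξ
        = (fun y => h y * (c * g θ' y)) (X *ᵥ θ' + ξ) := by
      intro ξ
      simp only [Pi.mul_apply]
      rw [hg_def]
      have : c * ENNReal.ofReal
          (Real.exp (-(∑ i, (((X *ᵥ θ' + ξ) - X *ᵥ θ') i) ^ 2) / (2 * σ ^ 2)))
          = φ ξ := by
        rw [add_sub_cancel_left, ← hφg ξ]
      rw [this, mul_comm]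
    rw [lintegral_congr hpt, volume_pi]
    exact lintegral_add_left_eq_self (fun y => h y * (c * g θ' y)) (X *ᵥ θ')
  -- posterior formula
  have hpost : ∀ (y : Fin n → ℝ) (s : Set (Fin d → ℝ)), MeasurableSet s →
      spikeSlabPosterior q μ0 σ X y s
        = (∫⁻ θ, g θ y ∂spikeSlabPrior q μ0)⁻¹ * ∫⁻ θ in s, g θ y ∂spikeSlabPrior q μ0 := by
    intro y s hs
    rw [spikeSlabPosterior]
    simp only [Measure.smul_apply, smul_eq_mul]
    rw [withDensity_apply _ hs, withDensity_apply _ MeasurableSet.univ, setLIntegral_univ]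
  -- measurability of the kernel
  have mT : Measurable fun p : (Fin d → ℝ) × (Fin n → ℝ) => X *ᵥ p.1 + p.2 := by
    apply Measurable.add
    · apply measurable_pi_lambda
      intro i
      show Measurable fun p : (Fin d → ℝ) × (Fin n → ℝ) => ∑ j, X i j * p.1 j
      exact Finset.measurable_sum _ fun j _ =>
        measurable_const.mul ((measurable_pi_apply j).comp measurable_fst)
    · exact measurable_snd
  have mZ : Measurable fun y => ∫⁻ θ, g θ y ∂spikeSlabPrior q μ0 := mg.lintegral_prod_left'
  have mWs : ∀ s : Set (Fin d → ℝ), MeasurableSet s →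
      Measurable fun y => ∫⁻ θ in s, g θ y ∂spikeSlabPrior q μ0 := by
    intro s hs
    have mf' : Measurable fun p : (Fin d → ℝ) × (Fin n → ℝ) =>
        (s ×ˢ (Set.univ : Set (Fin n → ℝ))).indicator (fun p => g p.1 p.2) p :=
      mg.indicator (hs.prod MeasurableSet.univ)
    have heq : (fun y => ∫⁻ θ in s, g θ y ∂spikeSlabPrior q μ0)
        = fun y => ∫⁻ θ, (s ×ˢ (Set.univ : Set (Fin n → ℝ))).indicator
            (fun p => g p.1 p.2) (θ, y) ∂spikeSlabPrior q μ0 := by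
      funext y
      rw [← lintegral_indicator hs]
      congr 1 with θ
      by_cases hθ : θ ∈ s <;> simp [Set.indicator, hθ]
    rw [heq]
    exact mf'.lintegral_prod_left'
  have mker : Measurable fun y => spikeSlabPosterior q μ0 σ X y := by
    apply Measure.measurable_of_measurable_coe
    intro s hs
    have : (fun y => spikeSlabPosterior q μ0 σ X y s)
        = fun y => (∫⁻ θ, g θ y ∂spikeSlabPrior q μ0)⁻¹
            * ∫⁻ θ in s, g θ y ∂spikeSlabPrior q μ0 := by
      funext y; exact hpost y s hs
    rw [this]
    exact mZ.inv.mul (mWs s hs)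
  -- now put everything together
  rw [posteriorSampleLaw, Measure.bind_apply hA
    (show Measurable fun p : (Fin d → ℝ) × (Fin n → ℝ) =>
        spikeSlabPosterior q μ0 σ X (X *ᵥ p.1 + p.2) from mker.comp mT).aemeasurable]
  have : ∀ p : (Fin d → ℝ) × (Fin n → ℝ),
      spikeSlabPosterior q μ0 σ X (X *ᵥ p.1 + p.2) A
        = (∫⁻ θ, g θ (X *ᵥ p.1 + p.2) ∂spikeSlabPrior q μ0)⁻¹
            * ∫⁻ θ in A, g θ (X *ᵥ p.1 + p.2) ∂spikeSlabPrior q μ0 :=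
    fun p => hpost _ A hA
  rw [lintegral_congr this]
  exact bayes_abstract (spikeSlabPrior q μ0) volume γ g mg hgle hgpos
    (fun θ' ξ => X *ᵥ θ' + ξ) mT c h1 h2 hA
/-- Chernoff bound on the support size under the spike and slab prior. -/
theorem prior_chernoff {d : ℕ} (q : Fin d → ℝ) (hq : ∀ i, q i ∈ Set.Icc (0 : ℝ) 1)
    (μ0 : Measure ℝ) [IsProbabilityMeasure μ0] (t : ℝ) :
    spikeSlabPrior q μ0
        {θ | t < ((Finset.univ.filter fun i => θ i ≠ 0).card : ℝ)}
      ≤ ENNReal.ofReal (Real.exp (2 * (∑ i, q i) - t)) := by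
  classical
  set b : ℝ → ℝ≥0∞ := fun x => if x = 0 then 1 else ENNReal.ofReal (Real.exp 1) with hb
  have hb_meas : Measurable b := Measurable.ite (measurableSet_eq) measurable_const measurable_const
  have hb_le : ∀ x, b x ≤ ENNReal.ofReal (Real.exp 1) := by
    intro x
    by_cases hx : x = 0
    · simp only [hb, hx, if_pos rfl]
      exact ENNReal.one_le_ofReal.mpr (by nlinarith [Real.add_one_le_exp (1:ℝ)])
    · simp only [hb, if_neg hx]
      exact le_rfl
  -- product formula
  have hprod : ∀ θ : Fin d → ℝ, ∏ i, b (θ i)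
      = ENNReal.ofReal (Real.exp ((Finset.univ.filter fun i => θ i ≠ 0).card : ℝ)) := by
    intro θ
    rw [← Finset.prod_filter_mul_prod_filter_not Finset.univ (fun i => θ i ≠ 0) (fun i => b (θ i))]
    have h1 : ∀ i ∈ Finset.univ.filter fun i => θ i ≠ 0, b (θ i) = ENNReal.ofReal (Real.exp 1) := by
      intro i hi
      simp only [Finset.mem_filter] at hi
      exact if_neg hi.2
    have h2 : ∀ i ∈ Finset.univ.filter fun i => ¬ θ i ≠ 0, b (θ i) = 1 := by
      intro i hi
      simp only [Finset.mem_filter, not_not] at hi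
      exact if_pos hi.2
    rw [Finset.prod_congr rfl h1, Finset.prod_congr rfl h2, Finset.prod_const, Finset.prod_const_one,
      mul_one, ← ENNReal.ofReal_pow (Real.exp_nonneg 1)]
    congr 1
    rw [← Real.exp_nat_mul]
    norm_num
  -- integral bound
  haveI := prior_factor_prob q hq μ0
  have hint : ∫⁻ θ, ∏ i, b (θ i) ∂spikeSlabPrior q μ0
      ≤ ENNReal.ofReal (Real.exp (2 * ∑ i, q i)) := by
    rw [spikeSlabPrior, my_lintegral_fin_prod _ _ (fun _ => hb_meas)]
    have hfac : ∀ i : Fin d, ∫⁻ x, b x ∂(ENNReal.ofReal (1 - q i) • Measure.dirac (0 : ℝ)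
        + ENNReal.ofReal (q i) • μ0) ≤ ENNReal.ofReal (Real.exp (2 * q i)) := by
      intro i
      rw [lintegral_add_measure, lintegral_smul_measure, lintegral_smul_measure,
        lintegral_dirac' _ hb_meas]
      have hb0 : b 0 = 1 := if_pos rfl
      have hμ0 : ∫⁻ x, b x ∂μ0 ≤ ENNReal.ofReal (Real.exp 1) := by
        calc ∫⁻ x, b x ∂μ0 ≤ ∫⁻ _, ENNReal.ofReal (Real.exp 1) ∂μ0 := lintegral_mono hb_le
        _ = ENNReal.ofReal (Real.exp 1) := by simp [lintegral_const]
      calc ENNReal.ofReal (1 - q i) * b 0 + ENNReal.ofReal (q i) * ∫⁻ x, b x ∂μ0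
          ≤ ENNReal.ofReal (1 - q i) * 1 + ENNReal.ofReal (q i) * ENNReal.ofReal (Real.exp 1) := by
            exact add_le_add (mul_le_mul_right (le_of_eq hb0) _) (mul_le_mul_right hμ0 _)
        _ = ENNReal.ofReal ((1 - q i) + q i * Real.exp 1) := by
            rw [mul_one, ← ENNReal.ofReal_mul (hq i).1,
              ← ENNReal.ofReal_add (by linarith [(hq i).2])
                (mul_nonneg (hq i).1 (Real.exp_nonneg 1))]
        _ ≤ ENNReal.ofReal (Real.exp (2 * q i)) := by
            apply ENNReal.ofReal_le_ofReal
            have h1 : Real.exp 1 ≤ 3 := by nlinarith [Real.exp_one_lt_d9]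
            have h2 : 1 + 2 * q i ≤ Real.exp (2 * q i) := by
              linarith [Real.add_one_le_exp (2 * q i)]
            nlinarith [(hq i).1]
    calc ∏ i, ∫⁻ x, b x ∂_ ≤ ∏ i, ENNReal.ofReal (Real.exp (2 * q i)) :=
          Finset.prod_le_prod' fun i _ => hfac i
      _ = ENNReal.ofReal (∏ i, Real.exp (2 * q i)) :=
          (ENNReal.ofReal_prod_of_nonneg fun i _ => Real.exp_nonneg _).symm
      _ = ENNReal.ofReal (Real.exp (2 * ∑ i, q i)) := by
          rw [← Real.exp_sum]
          congr 1
          rw [Finset.mul_sum]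
  -- Markov
  haveI := prior_prob q hq μ0
  have hmarkov := mul_meas_ge_le_lintegral₀ (μ := spikeSlabPrior q μ0)
    (f := fun θ => ∏ i, b (θ i))
    (Finset.measurable_prod _ fun i _ => hb_meas.comp (measurable_pi_apply i)).aemeasurable
    (ENNReal.ofReal (Real.exp t))
  have hsub : spikeSlabPrior q μ0 {θ | t < ((Finset.univ.filter fun i => θ i ≠ 0).card : ℝ)}
      ≤ spikeSlabPrior q μ0 {θ | ENNReal.ofReal (Real.exp t) ≤ ∏ i, b (θ i)} := by
    apply measure_mono
    intro θ hθ
    simp only [Set.mem_setOf_eq] at hθ ⊢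
    rw [hprod θ]
    exact ENNReal.ofReal_le_ofReal (Real.exp_le_exp.mpr hθ.le)
  have hε0 : ENNReal.ofReal (Real.exp t) ≠ 0 := by
    simp [ENNReal.ofReal_eq_zero, not_le, Real.exp_pos]
  have hεtop : ENNReal.ofReal (Real.exp t) ≠ ⊤ := ENNReal.ofReal_ne_top
  calc spikeSlabPrior q μ0 {θ | t < ((Finset.univ.filter fun i => θ i ≠ 0).card : ℝ)}
      ≤ spikeSlabPrior q μ0 {θ | ENNReal.ofReal (Real.exp t) ≤ ∏ i, b (θ i)} := hsub
    _ ≤ (∫⁻ θ, ∏ i, b (θ i) ∂spikeSlabPrior q μ0) / ENNReal.ofReal (Real.exp t) := by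
        rw [ENNReal.le_div_iff_mul_le (Or.inl hε0) (Or.inl hεtop), mul_comm]
        exact hmarkov
    _ ≤ ENNReal.ofReal (Real.exp (2 * ∑ i, q i)) / ENNReal.ofReal (Real.exp t) :=
        ENNReal.div_le_div_right hint _
    _ = ENNReal.ofReal (Real.exp (2 * ∑ i, q i) / Real.exp t) :=
        (ENNReal.ofReal_div_of_pos (Real.exp_pos t)).symm
    _ = ENNReal.ofReal (Real.exp (2 * (∑ i, q i) - t)) := by rw [Real.exp_sub]

theorem stmt_12 {n d : ℕ} (q : Fin d → ℝ) (hq : ∀ i, q i ∈ Set.Icc (0 : ℝ) 1)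
    (μ0 : Measure ℝ) [IsProbabilityMeasure μ0] (σ : ℝ) (hσ : 0 < σ)
    (X : Matrix (Fin n) (Fin d) ℝ) (k : ℝ) (hk : k = ∑ i, q i)
    (δ : ℝ) (hδ : δ ∈ Set.Ioo (0 : ℝ) 1) :
    ENNReal.ofReal (1 - δ) ≤
      posteriorSampleLaw q μ0 σ X
        {θ | ({i | θ i ≠ 0}.ncard : ℝ) ≤ 6 * (k + Real.log (3 / δ))} := by
  classical
  obtain ⟨hδ0, hδ1⟩ := hδ
  haveI := prior_prob q hq μ0
  set t : ℝ := 6 * (k + Real.log (3 / δ)) with ht_def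
  have hncard : ∀ θ : Fin d → ℝ, ({i | θ i ≠ 0}.ncard : ℝ)
      = ((Finset.univ.filter fun i => θ i ≠ 0).card : ℝ) := by
    intro θ
    congr 1
    rw [Set.ncard_eq_toFinset_card', Set.toFinset_setOf]
  have hAeq : {θ : Fin d → ℝ | ({i | θ i ≠ 0}.ncard : ℝ) ≤ t}
      = {θ : Fin d → ℝ | ((Finset.univ.filter fun i => θ i ≠ 0).card : ℝ) ≤ t} := by
    ext θ; simp only [Set.mem_setOf_eq, hncard θ]
  have hmeas : Measurable fun θ : Fin d → ℝ =>
      ((Finset.univ.filter fun i => θ i ≠ 0).card : ℝ) := by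
    have hrw : (fun θ : Fin d → ℝ => ((Finset.univ.filter fun i => θ i ≠ 0).card : ℝ))
        = fun θ => ∑ i, if θ i ≠ 0 then (1:ℝ) else 0 := by
      funext θ
      rw [Finset.card_filter]
      push_cast
      rfl
    rw [hrw]
    apply Finset.measurable_sum
    intro i _
    have hsi : MeasurableSet {θ : Fin d → ℝ | θ i ≠ 0} := by
      have hpre : {θ : Fin d → ℝ | θ i ≠ 0} = (fun θ : Fin d → ℝ => θ i) ⁻¹' ({0}ᶜ) := rfl
      rw [hpre]
      exact (measurable_pi_apply i) (measurableSet_singleton (0:ℝ)).compl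
    exact Measurable.ite hsi measurable_const measurable_const
  have hA : MeasurableSet
      {θ : Fin d → ℝ | ((Finset.univ.filter fun i => θ i ≠ 0).card : ℝ) ≤ t} :=
    measurableSet_le hmeas measurable_const
  rw [hAeq, posterior_marginal q hq μ0 σ hσ X hA]
  have hk0 : 0 ≤ k := hk ▸ Finset.sum_nonneg fun i _ => (hq i).1
  have hcompl : spikeSlabPrior q μ0
      {θ | t < ((Finset.univ.filter fun i => θ i ≠ 0).card : ℝ)} ≤ ENNReal.ofReal δ := by
    refine le_trans (prior_chernoff q hq μ0 t) ?_
    apply ENNReal.ofReal_le_ofReal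
    rw [← Real.exp_log hδ0]
    apply Real.exp_le_exp.mpr
    have hlog3 : 0 < Real.log 3 := Real.log_pos (by norm_num)
    have hlogδ : Real.log δ < 0 := Real.log_neg hδ0 hδ1
    have hld : Real.log (3/δ) = Real.log 3 - Real.log δ := Real.log_div (by norm_num) hδ0.ne'
    have hsum : (∑ i, q i) = k := hk.symm
    rw [hsum, ht_def, hld]
    linarith
  have honeδ : (1:ℝ≥0∞) ≤ spikeSlabPrior q μ0
      {θ : Fin d → ℝ | ((Finset.univ.filter fun i => θ i ≠ 0).card : ℝ) ≤ t}
      + ENNReal.ofReal δ := by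
    have hunion : (Set.univ : Set (Fin d → ℝ))
        = {θ : Fin d → ℝ | ((Finset.univ.filter fun i => θ i ≠ 0).card : ℝ) ≤ t}
          ∪ {θ | t < ((Finset.univ.filter fun i => θ i ≠ 0).card : ℝ)} := by
      ext θ
      simp only [Set.mem_univ, Set.mem_union, Set.mem_setOf_eq, true_iff]
      exact le_or_gt _ _
    calc (1:ℝ≥0∞) = spikeSlabPrior q μ0 Set.univ := measure_univ.symm
      _ ≤ spikeSlabPrior q μ0 {θ : Fin d → ℝ | ((Finset.univ.filter fun i => θ i ≠ 0).card : ℝ) ≤ t}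
          + spikeSlabPrior q μ0 {θ | t < ((Finset.univ.filter fun i => θ i ≠ 0).card : ℝ)} := by
        rw [hunion]; exact measure_union_le _ _
      _ ≤ _ + ENNReal.ofReal δ := add_le_add_right hcompl _
  calc ENNReal.ofReal (1 - δ) = 1 - ENNReal.ofReal δ := by
        rw [ENNReal.ofReal_sub _ hδ0.le, ENNReal.ofReal_one]
    _ ≤ _ := tsub_le_iff_right.mpr honeδ
end

section
/- Under the conditions of the Gaussian centered rejection sampling lemma — X is (ε, k*)-RIP with ε ∈ (0,½), S ⊆ [d] with supp(θ̂) ⊆ S and |S| ≤ k*, z ∈ ℝ^d, A_S = (1/σ²)[XᵀX]_{S×S} + I_S — define P(S) = (∏_{i∈S} q_i/(1-q_i)) · exp(½‖z_S‖²_{A_S⁻¹}) / √(det A_S) and Q(S) = (∏_{i∈S} q_i/(1-q_i)) · (σ²/(1+σ²))^{|S|/2} · exp(σ²‖z_S‖₂²/(2(1+σ²))). Then (1/(1+ε))^{k*/2} exp(-σ²ε‖z_S‖₂²/(1+σ²)²) ≤ P(S)/Q(S) ≤ (1/(1-ε))^{k*/2} exp(σ²ε‖z_S‖₂²/(1+σ²)²).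 -/
open Matrix

section Aux

lemma RIPaux.dot_symm {m : Type*} [Fintype m] (A : Matrix m m ℝ) (h : A.IsHermitian)
    (x y : m → ℝ) : x ⬝ᵥ (A *ᵥ y) = y ⬝ᵥ (A *ᵥ x) := by
  rw [dotProduct_mulVec, ← mulVec_transpose, show Aᵀ = A by simpa using h.eq, dotProduct_comm]

lemma RIPaux.cs_psd {m : Type*} [Fintype m] (A : Matrix m m ℝ) (h : A.IsHermitian) (L : ℝ)
    (hL : 0 < L)
    (hb : ∀ v : m → ℝ, L * (∑ i, v i ^ 2) ≤ v ⬝ᵥ (A *ᵥ v)) (x y : m → ℝ) :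
    (x ⬝ᵥ (A *ᵥ y)) ^ 2 ≤ (x ⬝ᵥ (A *ᵥ x)) * (y ⬝ᵥ (A *ᵥ y)) := by
  set a := x ⬝ᵥ (A *ᵥ x) with ha
  set b := x ⬝ᵥ (A *ᵥ y) with hbb
  set c := y ⬝ᵥ (A *ᵥ y) with hc
  have hsy : ∀ v : m → ℝ, (0:ℝ) ≤ ∑ i, v i ^ 2 := fun v =>
    Finset.sum_nonneg fun i _ => sq_nonneg _
  have hcnn : 0 ≤ c := le_trans (by positivity) (hb y)
  rcases eq_or_lt_of_le hcnn with hc0 | hc0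
  · have hy : y = 0 := by
      have h1 := hb y
      have h2 : ∑ i, y i ^ 2 = 0 := by nlinarith [hsy y]
      funext i
      have := (Finset.sum_eq_zero_iff_of_nonneg (fun i _ => sq_nonneg (y i))).mp h2 i
        (Finset.mem_univ i)
      simpa [pow_eq_zero_iff] using this
    have : b = 0 := by simp [hbb, hy]
    simp [this, ← hc0]
  · have hexp : (0:ℝ) ≤ (c • x - b • y) ⬝ᵥ (A *ᵥ (c • x - b • y)) :=
      le_trans (by positivity) (hb _)
    have hba : y ⬝ᵥ (A *ᵥ x) = b := (RIPaux.dot_symm A h x y).symm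
    have : (c • x - b • y) ⬝ᵥ (A *ᵥ (c • x - b • y)) = c * (c * a - b ^ 2) := by
      simp only [mulVec_sub, mulVec_smul, sub_dotProduct, dotProduct_sub, smul_dotProduct,
        dotProduct_smul, smul_eq_mul, ← ha, ← hbb, ← hc, hba]
      ring
    nlinarith

lemma RIPaux.eig_mem {m : Type*} [Fintype m] [DecidableEq m] (A : Matrix m m ℝ)
    (h : A.IsHermitian) (L U : ℝ)
    (hb : ∀ v : m → ℝ, L * (∑ i, v i ^ 2) ≤ v ⬝ᵥ (A *ᵥ v) ∧ v ⬝ᵥ (A *ᵥ v) ≤ U * (∑ i, v i ^ 2))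
    (i : m) : L ≤ h.eigenvalues i ∧ h.eigenvalues i ≤ U := by
  have hval := h.eigenvalues_eq i
  set u : m → ℝ := ⇑(h.eigenvectorBasis i) with hu
  have hnorm : ∑ j, u j ^ 2 = 1 := by
    have h1 := h.eigenvectorBasis.orthonormal.1 i
    have := congrArg (fun t : ℝ => t ^ 2) h1
    simp only [EuclideanSpace.norm_eq, Real.sq_sqrt (Finset.sum_nonneg fun j _ => sq_nonneg _),
      Real.norm_eq_abs, sq_abs] at this
    simpa using this
  have : h.eigenvalues i = u ⬝ᵥ (A *ᵥ u) := by
    simpa [star, dotProduct] using hval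
  rw [this]
  have := hb u
  rw [hnorm] at this
  simpa using this

lemma RIPaux.det_bounds {m : Type*} [Fintype m] [DecidableEq m] (A : Matrix m m ℝ)
    (h : A.IsHermitian) (L U : ℝ) (hL : 0 < L)
    (hb : ∀ v : m → ℝ, L * (∑ i, v i ^ 2) ≤ v ⬝ᵥ (A *ᵥ v) ∧ v ⬝ᵥ (A *ᵥ v) ≤ U * (∑ i, v i ^ 2)) :
    L ^ (Fintype.card m) ≤ A.det ∧ A.det ≤ U ^ (Fintype.card m) := by
  have hdet : A.det = ∏ i, h.eigenvalues i := by
    simpa using h.det_eq_prod_eigenvalues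
  rw [hdet]
  constructor
  · calc L ^ Fintype.card m = ∏ _i : m, L := by simp
    _ ≤ ∏ i, h.eigenvalues i :=
      Finset.prod_le_prod (fun i _ => le_of_lt hL) (fun i _ => (RIPaux.eig_mem A h L U hb i).1)
  · have : (∏ i, h.eigenvalues i) ≤ ∏ _i : m, U :=
      Finset.prod_le_prod (fun i _ => le_of_lt (lt_of_lt_of_le hL (RIPaux.eig_mem A h L U hb i).1))
        (fun i _ => (RIPaux.eig_mem A h L U hb i).2)
    simpa using this

lemma RIPaux.inv_quad_bounds {m : Type*} [Fintype m] [DecidableEq m] (A : Matrix m m ℝ)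
    (h : A.IsHermitian) (L U : ℝ) (hL : 0 < L) (hdet : IsUnit A.det)
    (hb : ∀ v : m → ℝ, L * (∑ i, v i ^ 2) ≤ v ⬝ᵥ (A *ᵥ v) ∧ v ⬝ᵥ (A *ᵥ v) ≤ U * (∑ i, v i ^ 2))
    (z : m → ℝ) :
    (∑ i, z i ^ 2) / U ≤ z ⬝ᵥ (A⁻¹ *ᵥ z) ∧ z ⬝ᵥ (A⁻¹ *ᵥ z) ≤ (∑ i, z i ^ 2) / L := by
  set w : m → ℝ := A⁻¹ *ᵥ z with hw
  have hAw : A *ᵥ w = z := by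
    rw [hw, mulVec_mulVec, Matrix.mul_nonsing_inv A hdet, one_mulVec]
  set Z := ∑ i, z i ^ 2 with hZ
  set W := ∑ i, w i ^ 2 with hW
  have hZnn : 0 ≤ Z := Finset.sum_nonneg fun i _ => sq_nonneg _
  have hWnn : 0 ≤ W := Finset.sum_nonneg fun i _ => sq_nonneg _
  have ht : z ⬝ᵥ w = w ⬝ᵥ (A *ᵥ w) := by rw [hAw, dotProduct_comm]
  set t := z ⬝ᵥ w with htdef
  have hLt : L * W ≤ t := ht ▸ (hb w).1
  have htU : t ≤ U * W := ht ▸ (hb w).2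
  have hcs : t ^ 2 ≤ Z * W := by
    simpa [htdef, hZ, hW, dotProduct] using Finset.sum_mul_sq_le_sq_mul_sq Finset.univ z w
  have htnn : 0 ≤ t := le_trans (by positivity) hLt
  constructor
  · have hZz : Z = z ⬝ᵥ (A *ᵥ w) := by rw [hAw]; simp [hZ, dotProduct, sq]
    have hgcs : (z ⬝ᵥ (A *ᵥ w)) ^ 2 ≤ (z ⬝ᵥ (A *ᵥ z)) * (w ⬝ᵥ (A *ᵥ w)) :=
      RIPaux.cs_psd A h L hL (fun v => (hb v).1) z w
    have hzAz : z ⬝ᵥ (A *ᵥ z) ≤ U * Z := (hb z).2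
    have h2 : Z ^ 2 ≤ U * Z * t := by
      calc Z ^ 2 = (z ⬝ᵥ (A *ᵥ w)) ^ 2 := by rw [← hZz]
      _ ≤ (z ⬝ᵥ (A *ᵥ z)) * (w ⬝ᵥ (A *ᵥ w)) := hgcs
      _ ≤ U * Z * t := by
          rw [← ht]
          exact mul_le_mul_of_nonneg_right hzAz htnn
    rcases eq_or_lt_of_le hZnn with h0 | h0
    · rw [← h0]; simpa using htnn
    · have hU : 0 < U := by nlinarith [mul_nonneg hZnn htnn]
      rw [div_le_iff₀ hU]
      nlinarith [mul_le_mul_of_nonneg_left hLt hZnn]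
  · rw [le_div_iff₀ hL]
    rcases eq_or_lt_of_le htnn with h0 | h0
    · nlinarith
    · nlinarith [mul_le_mul_of_nonneg_left hcs hL.le, mul_le_mul_of_nonneg_left hLt hZnn]

lemma RIPaux.quad_bound {n d kstar : ℕ} (X : Matrix (Fin n) (Fin d) ℝ) (ε σ : ℝ)
    (hσ : 0 < σ) (hX : IsRIP X ε kstar) (S : Finset (Fin d)) (hcard : S.card ≤ kstar)
    (A : Matrix S S ℝ)
    (hA : A = (σ ^ 2)⁻¹ • ((Xᵀ * X).submatrix (Subtype.val : S → Fin d) Subtype.val) + 1)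
    (v : S → ℝ) :
    (1 + (1 - ε) / σ ^ 2) * (∑ i, v i ^ 2) ≤ v ⬝ᵥ (A *ᵥ v) ∧
      v ⬝ᵥ (A *ᵥ v) ≤ (1 + (1 + ε) / σ ^ 2) * (∑ i, v i ^ 2) := by
  classical
  set θ : Fin d → ℝ := fun i => if h : i ∈ S then v ⟨i, h⟩ else 0 with hθ
  have hsupp : {i | θ i ≠ 0} ⊆ ↑S := by
    intro i hi
    by_contra h
    exact hi (dif_neg (by simpa using h))
  have hncard : {i | θ i ≠ 0}.ncard ≤ kstar := by
    refine le_trans ?_ hcard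
    have := Set.ncard_le_ncard hsupp S.finite_toSet
    simpa [Set.ncard_coe_finset] using this
  have hsum : ∑ i, θ i ^ 2 = ∑ i, v i ^ 2 := by
    rw [← Finset.sum_subset (Finset.subset_univ S) (by intro i _ hi; simp [hθ, hi])]
    rw [← Finset.sum_attach S (fun i => θ i ^ 2)]
    congr 1
    funext i
    simp [hθ, i.2]
  set M : Matrix (Fin n) S ℝ := X.submatrix id (Subtype.val : S → Fin d) with hM
  have hXθ : X *ᵥ θ = M *ᵥ v := by
    funext i
    simp only [hM, mulVec, dotProduct, submatrix_apply, id_eq]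
    rw [← Finset.sum_subset (Finset.subset_univ S) (by intro j _ hj; simp [hθ, hj])]
    rw [← Finset.sum_attach S (fun j => X i j * θ j)]
    congr 1; funext j; simp [hθ, j.2]
  have hsubm : ((Xᵀ * X).submatrix (Subtype.val : S → Fin d) Subtype.val) = Mᵀ * M := by
    ext i j
    simp [hM, Matrix.mul_apply]
  have hquad : v ⬝ᵥ (((Xᵀ * X).submatrix (Subtype.val : S → Fin d) Subtype.val) *ᵥ v)
      = ∑ i, (X *ᵥ θ) i ^ 2 := by
    rw [hsubm, ← mulVec_mulVec, dotProduct_mulVec, vecMul_transpose, ← hXθ]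
    simp [dotProduct, sq]
  have hAv : v ⬝ᵥ (A *ᵥ v) = (σ ^ 2)⁻¹ * (∑ i, (X *ᵥ θ) i ^ 2) + ∑ i, v i ^ 2 := by
    rw [hA, add_mulVec, smul_mulVec, one_mulVec, dotProduct_add, dotProduct_smul,
      smul_eq_mul, hquad]
    simp [dotProduct, sq]
  have hrip := hX θ hncard
  rw [hsum] at hrip
  have hσ2 : (0:ℝ) < σ ^ 2 := by positivity
  have hvnn : (0:ℝ) ≤ ∑ i, v i ^ 2 := Finset.sum_nonneg fun i _ => sq_nonneg _
  constructor
  · rw [hAv]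
    have := mul_le_mul_of_nonneg_left hrip.1 (le_of_lt (inv_pos.mpr hσ2))
    rw [div_eq_inv_mul]
    nlinarith
  · rw [hAv]
    have := mul_le_mul_of_nonneg_left hrip.2 (le_of_lt (inv_pos.mpr hσ2))
    rw [div_eq_inv_mul]
    nlinarith

end Aux

set_option maxHeartbeats 2000000 in
theorem stmt_16 {n d kstar : ℕ} (X : Matrix (Fin n) (Fin d) ℝ) (ε σ : ℝ)
    (hε : ε ∈ Set.Ioo (0 : ℝ) (1 / 2)) (hσ : 0 < σ) (hX : IsRIP X ε kstar)
    (q : Fin d → ℝ) (hq : ∀ i, q i ∈ Set.Ioo (0 : ℝ) 1)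
    (θhat z : Fin d → ℝ) (S : Finset (Fin d))
    (hsupp : ∀ i, θhat i ≠ 0 → i ∈ S) (hcard : S.card ≤ kstar)
    (A : Matrix S S ℝ)
    (hA : A = (σ ^ 2)⁻¹ • ((Xᵀ * X).submatrix (Subtype.val : S → Fin d) Subtype.val) + 1)
    (zS : S → ℝ) (hzS : zS = fun i : S => z i.1)
    (P Q : ℝ)
    (hP : P = (∏ i ∈ S, q i / (1 - q i)) *
      Real.exp ((1 / 2) * (zS ⬝ᵥ (A⁻¹ *ᵥ zS))) / Real.sqrt A.det)
    (hQ : Q = (∏ i ∈ S, q i / (1 - q i)) *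
      (σ ^ 2 / (1 + σ ^ 2)) ^ ((S.card : ℝ) / 2) *
      Real.exp (σ ^ 2 * (∑ i, zS i ^ 2) / (2 * (1 + σ ^ 2)))) :
    (1 / (1 + ε)) ^ ((kstar : ℝ) / 2) *
        Real.exp (-(σ ^ 2 * ε * (∑ i, zS i ^ 2)) / (1 + σ ^ 2) ^ 2) ≤ P / Q ∧
      P / Q ≤ (1 / (1 - ε)) ^ ((kstar : ℝ) / 2) *
        Real.exp (σ ^ 2 * ε * (∑ i, zS i ^ 2) / (1 + σ ^ 2) ^ 2) := by
  classical
  obtain ⟨hε0, hε2⟩ := hε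
  have hσ2 : (0:ℝ) < σ ^ 2 := by positivity
  have hp : (0:ℝ) < 1 + σ ^ 2 := by positivity
  set L : ℝ := 1 + (1 - ε) / σ ^ 2 with hLdef
  set U : ℝ := 1 + (1 + ε) / σ ^ 2 with hUdef
  have hL : 0 < L := by
    rw [hLdef]
    have : 0 < (1 - ε) / σ ^ 2 := div_pos (by linarith) hσ2
    linarith
  have hU : 0 < U := by
    rw [hUdef]
    have : 0 < (1 + ε) / σ ^ 2 := div_pos (by linarith) hσ2
    linarith
  have hb := RIPaux.quad_bound X ε σ hσ hX S hcard A hA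
  have hherm : A.IsHermitian := by
    rw [hA]
    refine IsHermitian.add ?_ isHermitian_one
    have h1 : (Xᵀ * X).IsHermitian := by
      have := isHermitian_conjTranspose_mul_self X
      simpa using this
    have h2 : ((Xᵀ * X).submatrix (Subtype.val : S → Fin d) Subtype.val).IsHermitian :=
      h1.submatrix _
    unfold Matrix.IsHermitian at *
    rw [conjTranspose_smul, h2]
    simp
  have hcardS : Fintype.card S = S.card := Fintype.card_coe S
  have hdet := RIPaux.det_bounds A hherm L U hL hb
  rw [hcardS] at hdet
  have hdetpos : 0 < A.det := lt_of_lt_of_le (pow_pos hL _) hdet.1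
  have hdetunit : IsUnit A.det := isUnit_iff_ne_zero.mpr (ne_of_gt hdetpos)
  set Z : ℝ := ∑ i, zS i ^ 2 with hZdef
  have hZnn : 0 ≤ Z := Finset.sum_nonneg fun i _ => sq_nonneg _
  set t : ℝ := zS ⬝ᵥ (A⁻¹ *ᵥ zS) with htdef
  have htb := RIPaux.inv_quad_bounds A hherm L U hL hdetunit hb zS
  have hm : (0:ℝ) < 1 + σ ^ 2 - ε := by linarith
  have hM : (0:ℝ) < 1 + σ ^ 2 + ε := by linarith
  have hZL : Z / L = σ ^ 2 * Z / (1 + σ ^ 2 - ε) := by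
    rw [div_eq_div_iff (ne_of_gt hL) (ne_of_gt hm), hLdef]
    field_simp
    ring
  have hZU : Z / U = σ ^ 2 * Z / (1 + σ ^ 2 + ε) := by
    rw [div_eq_div_iff (ne_of_gt hU) (ne_of_gt hM), hUdef]
    field_simp
    ring
  have htup : t ≤ σ ^ 2 * Z / (1 + σ ^ 2 - ε) := hZL ▸ htb.2
  have htlo : σ ^ 2 * Z / (1 + σ ^ 2 + ε) ≤ t := hZU ▸ htb.1
  -- exponent bounds
  have Eup : (1/2) * t - σ ^ 2 * Z / (2 * (1 + σ ^ 2)) ≤ σ ^ 2 * ε * Z / (1 + σ ^ 2) ^ 2 := by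
    have step1 : (1/2) * t - σ ^ 2 * Z / (2 * (1 + σ ^ 2)) ≤
        (1/2) * (σ ^ 2 * Z / (1 + σ ^ 2 - ε)) - σ ^ 2 * Z / (2 * (1 + σ ^ 2)) := by
      have := mul_le_mul_of_nonneg_left htup (by norm_num : (0:ℝ) ≤ 1/2)
      linarith
    have step2 : (1/2) * (σ ^ 2 * Z / (1 + σ ^ 2 - ε)) - σ ^ 2 * Z / (2 * (1 + σ ^ 2)) =
        σ ^ 2 * ε * Z / (2 * (1 + σ ^ 2 - ε) * (1 + σ ^ 2)) := by
      field_simp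
      ring
    have step3 : σ ^ 2 * ε * Z / (2 * (1 + σ ^ 2 - ε) * (1 + σ ^ 2)) ≤
        σ ^ 2 * ε * Z / (1 + σ ^ 2) ^ 2 := by
      rw [div_le_div_iff₀ (by positivity) (by positivity)]
      have hnum : (0:ℝ) ≤ σ ^ 2 * ε * Z := by positivity
      have hden : (1 + σ ^ 2) ^ 2 ≤ 2 * (1 + σ ^ 2 - ε) * (1 + σ ^ 2) := by nlinarith
      exact mul_le_mul_of_nonneg_left hden hnum
    linarith [step2 ▸ step1, step3]
  have Elo : -(σ ^ 2 * ε * Z) / (1 + σ ^ 2) ^ 2 ≤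
      (1/2) * t - σ ^ 2 * Z / (2 * (1 + σ ^ 2)) := by
    have step1 : (1/2) * (σ ^ 2 * Z / (1 + σ ^ 2 + ε)) - σ ^ 2 * Z / (2 * (1 + σ ^ 2)) ≤
        (1/2) * t - σ ^ 2 * Z / (2 * (1 + σ ^ 2)) := by
      have := mul_le_mul_of_nonneg_left htlo (by norm_num : (0:ℝ) ≤ 1/2)
      linarith
    have step2 : (1/2) * (σ ^ 2 * Z / (1 + σ ^ 2 + ε)) - σ ^ 2 * Z / (2 * (1 + σ ^ 2)) =
        -(σ ^ 2 * ε * Z / (2 * (1 + σ ^ 2 + ε) * (1 + σ ^ 2))) := by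
      field_simp
      ring
    have step3 : -(σ ^ 2 * ε * Z) / (1 + σ ^ 2) ^ 2 ≤
        -(σ ^ 2 * ε * Z / (2 * (1 + σ ^ 2 + ε) * (1 + σ ^ 2))) := by
      rw [neg_div]
      apply neg_le_neg
      rw [div_le_div_iff₀ (by positivity) (by positivity)]
      have hnum : (0:ℝ) ≤ σ ^ 2 * ε * Z := by positivity
      have hden : (1 + σ ^ 2) ^ 2 ≤ 2 * (1 + σ ^ 2 + ε) * (1 + σ ^ 2) := by nlinarith
      exact mul_le_mul_of_nonneg_left hden hnum
    linarith [step2 ▸ step1, step3]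
  -- bounds on the denominator D
  set r : ℝ := σ ^ 2 / (1 + σ ^ 2) with hrdef
  have hr : 0 < r := by positivity
  set c : ℕ := S.card with hcdef
  set D : ℝ := Real.sqrt A.det * r ^ ((c:ℝ)/2) with hDdef
  have hDpos : 0 < D := by
    apply mul_pos (Real.sqrt_pos.mpr hdetpos) (Real.rpow_pos_of_pos hr _)
  have hD : D = (A.det * r ^ c) ^ ((1:ℝ)/2) := by
    rw [hDdef, Real.sqrt_eq_rpow, Real.mul_rpow hdetpos.le (pow_nonneg hr.le c)]
    congr 1
    rw [← Real.rpow_natCast r c, ← Real.rpow_mul hr.le, mul_one_div]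
  have hLr : L * r = (1 + σ ^ 2 - ε) / (1 + σ ^ 2) := by
    rw [hLdef, hrdef]
    field_simp
    ring
  have hUr : U * r = (1 + σ ^ 2 + ε) / (1 + σ ^ 2) := by
    rw [hUdef, hrdef]
    field_simp
    ring
  have hLrpos : 0 < L * r := mul_pos hL hr
  have hUrpos : 0 < U * r := mul_pos hU hr
  have hck : (c:ℝ)/2 ≤ (kstar:ℝ)/2 := by
    have : (c:ℝ) ≤ (kstar:ℝ) := by exact_mod_cast hcard
    linarith
  have hDup : D ≤ (1 + ε) ^ ((kstar:ℝ)/2) := by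
    have h1 : A.det * r ^ c ≤ (U * r) ^ c := by
      rw [mul_pow]
      exact mul_le_mul_of_nonneg_right hdet.2 (pow_nonneg hr.le c)
    have h2 : D ≤ ((U * r) ^ c) ^ ((1:ℝ)/2) := by
      rw [hD]
      exact Real.rpow_le_rpow (by positivity) h1 (by norm_num)
    have h3 : ((U * r) ^ c) ^ ((1:ℝ)/2) = (U * r) ^ ((c:ℝ)/2) := by
      rw [← Real.rpow_natCast (U*r) c, ← Real.rpow_mul hUrpos.le, mul_one_div]
    have h4 : (U * r) ^ ((c:ℝ)/2) ≤ (1 + ε) ^ ((c:ℝ)/2) := by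
      apply Real.rpow_le_rpow hUrpos.le _ (by positivity)
      rw [hUr, div_le_iff₀ hp]
      nlinarith
    have h5 : (1 + ε) ^ ((c:ℝ)/2) ≤ (1 + ε) ^ ((kstar:ℝ)/2) :=
      Real.rpow_le_rpow_of_exponent_le (by linarith) hck
    calc D ≤ ((U * r) ^ c) ^ ((1:ℝ)/2) := h2
    _ = (U * r) ^ ((c:ℝ)/2) := h3
    _ ≤ (1 + ε) ^ ((c:ℝ)/2) := h4
    _ ≤ (1 + ε) ^ ((kstar:ℝ)/2) := h5
  have hDlo : (L * r) ^ ((c:ℝ)/2) ≤ D := by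
    have h1 : (L * r) ^ c ≤ A.det * r ^ c := by
      rw [mul_pow]
      exact mul_le_mul_of_nonneg_right hdet.1 (pow_nonneg hr.le c)
    have h2 : ((L * r) ^ c) ^ ((1:ℝ)/2) ≤ D := by
      rw [hD]
      exact Real.rpow_le_rpow (by positivity) h1 (by norm_num)
    have h3 : ((L * r) ^ c) ^ ((1:ℝ)/2) = (L * r) ^ ((c:ℝ)/2) := by
      rw [← Real.rpow_natCast (L*r) c, ← Real.rpow_mul hLrpos.le, mul_one_div]
    rw [← h3]
    exact h2
  have hinvDup : 1 / D ≤ (1 / (1 - ε)) ^ ((kstar:ℝ)/2) := by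
    have hLrD't : 0 < (L * r) ^ ((c:ℝ)/2) := Real.rpow_pos_of_pos hLrpos _
    have h1 : 1 / D ≤ 1 / (L * r) ^ ((c:ℝ)/2) :=
      one_div_le_one_div_of_le hLrD't hDlo
    have h2 : 1 / (L * r) ^ ((c:ℝ)/2) = (1 / (L * r)) ^ ((c:ℝ)/2) := by
      rw [one_div, one_div, ← Real.inv_rpow hLrpos.le]
    have h3 : (1 / (L * r)) ^ ((c:ℝ)/2) ≤ (1 / (1 - ε)) ^ ((c:ℝ)/2) := by
      apply Real.rpow_le_rpow (by positivity) _ (by positivity)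
      rw [hLr, one_div_div, div_le_div_iff₀ hm (by linarith)]
      nlinarith
    have h4 : (1 / (1 - ε)) ^ ((c:ℝ)/2) ≤ (1 / (1 - ε)) ^ ((kstar:ℝ)/2) := by
      apply Real.rpow_le_rpow_of_exponent_le _ hck
      rw [le_one_div (by norm_num) (by linarith)]
      linarith
    calc 1 / D ≤ 1 / (L * r) ^ ((c:ℝ)/2) := h1
    _ = (1 / (L * r)) ^ ((c:ℝ)/2) := h2
    _ ≤ (1 / (1 - ε)) ^ ((c:ℝ)/2) := h3
    _ ≤ (1 / (1 - ε)) ^ ((kstar:ℝ)/2) := h4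
  have hinvDlo : (1 / (1 + ε)) ^ ((kstar:ℝ)/2) ≤ 1 / D := by
    have h1 : (1 / (1 + ε)) ^ ((kstar:ℝ)/2) = 1 / (1 + ε) ^ ((kstar:ℝ)/2) := by
      rw [one_div, one_div, ← Real.inv_rpow (by linarith : (0:ℝ) ≤ 1 + ε)]
    rw [h1]
    exact one_div_le_one_div_of_le hDpos hDup
  -- rewrite P / Q
  have hC : 0 < ∏ i ∈ S, q i / (1 - q i) := by
    apply Finset.prod_pos
    intro i _
    exact div_pos (hq i).1 (by linarith [(hq i).2])
  have hPQ : P / Q = Real.exp ((1/2) * t - σ ^ 2 * Z / (2 * (1 + σ ^ 2))) / D := by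
    rw [hP, hQ, Real.exp_sub, hDdef]
    have hq1 : (∏ i ∈ S, q i) ≠ 0 :=
      ne_of_gt (Finset.prod_pos fun i _ => (hq i).1)
    have hq2 : (∏ i ∈ S, (1 - q i)) ≠ 0 :=
      ne_of_gt (Finset.prod_pos fun i _ => by linarith [(hq i).2])
    have hsne : Real.sqrt A.det ≠ 0 := ne_of_gt (Real.sqrt_pos.mpr hdetpos)
    have hrne : r ^ ((c:ℝ)/2) ≠ 0 := ne_of_gt (Real.rpow_pos_of_pos hr _)
    have hexne : Real.exp (σ ^ 2 * Z / (2 * (1 + σ ^ 2))) ≠ 0 := Real.exp_ne_zero _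
    rw [Finset.prod_div_distrib]
    field_simp
  constructor
  · rw [hPQ]
    have h1 : Real.exp (-(σ ^ 2 * ε * Z) / (1 + σ ^ 2) ^ 2) ≤
        Real.exp ((1/2) * t - σ ^ 2 * Z / (2 * (1 + σ ^ 2))) := Real.exp_le_exp.mpr Elo
    have h2 := hinvDlo
    have key : (1 / (1 + ε)) ^ ((kstar:ℝ)/2) * Real.exp (-(σ ^ 2 * ε * Z) / (1 + σ ^ 2) ^ 2) ≤
        (1 / D) * Real.exp ((1/2) * t - σ ^ 2 * Z / (2 * (1 + σ ^ 2))) := by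
      apply mul_le_mul h2 h1 (Real.exp_pos _).le (by positivity)
    calc (1 / (1 + ε)) ^ ((kstar:ℝ)/2) * Real.exp (-(σ ^ 2 * ε * Z) / (1 + σ ^ 2) ^ 2) ≤
        (1 / D) * Real.exp ((1/2) * t - σ ^ 2 * Z / (2 * (1 + σ ^ 2))) := key
    _ = Real.exp ((1/2) * t - σ ^ 2 * Z / (2 * (1 + σ ^ 2))) / D := by ring
  · rw [hPQ]
    have h1 : Real.exp ((1/2) * t - σ ^ 2 * Z / (2 * (1 + σ ^ 2))) ≤
        Real.exp (σ ^ 2 * ε * Z / (1 + σ ^ 2) ^ 2) := Real.exp_le_exp.mpr Eup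
    calc Real.exp ((1/2) * t - σ ^ 2 * Z / (2 * (1 + σ ^ 2))) / D =
        (1 / D) * Real.exp ((1/2) * t - σ ^ 2 * Z / (2 * (1 + σ ^ 2))) := by ring
    _ ≤ (1 / (1 - ε)) ^ ((kstar:ℝ)/2) * Real.exp (σ ^ 2 * ε * Z / (1 + σ ^ 2) ^ 2) := by
      apply mul_le_mul hinvDup h1 (Real.exp_pos _).le
        (Real.rpow_pos_of_pos (one_div_pos.mpr (by linarith)) _).le
end
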